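/- arXiv:2003.03084 — 5 statements merged into one kernel-verified Lean document; each statement's English description precedes it below -/
import Mathlib

section
/- A graph G has a path factor if and only if for every vertex subset S of G, the number of isolated vertices of G − S is at most 2|S|. -/
open SimpleGraph

/-- A spanning subgraph each of whose components is a path of order at least 2. -/
def SimpleGraph.Subgraph.IsPathFactor {V : Type*} {G : SimpleGraph V} (F : G.Subgraph) : Prop :=
  F.verts = Set.univ ∧
    ∀ c : F.coe.ConnectedComponent,
      ∃ k : ℕ, 2 ≤ k ∧ Nonempty (F.coe.induce c.supp ≃g pathGraph k)

/-- `G` has a path factor. -/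
def SimpleGraph.HasPathFactor {V : Type*} (G : SimpleGraph V) : Prop :=
  ∃ F : G.Subgraph, F.IsPathFactor

/-- A spanning subgraph each of whose components is isomorphic to `P₂` or `P₃`. -/
def SimpleGraph.Subgraph.IsP2P3Factor {V : Type*} {G : SimpleGraph V} (F : G.Subgraph) : Prop :=
  F.verts = Set.univ ∧
    ∀ c : F.coe.ConnectedComponent,
      ∃ k : ℕ, (k = 2 ∨ k = 3) ∧ Nonempty (F.coe.induce c.supp ≃g pathGraph k)

/-- The number of isolated vertices of `G − S`. -/
noncomputable def SimpleGraph.numIsolatedOutside {V : Type*} (G : SimpleGraph V) (S : Set V) : ℕ :=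
  Nat.card {v : V | v ∉ S ∧ ∀ w, G.Adj v w → w ∈ S}

/-- The number of connected components of `G − S`. -/
noncomputable def SimpleGraph.numComponentsOutside {V : Type*} (G : SimpleGraph V) (S : Set V) : ℕ :=
  Nat.card (G.induce Sᶜ).ConnectedComponent

/-- `G` is 1-tough: any cut set `S` satisfies `|S| ≥ c(G − S)`. -/
def SimpleGraph.IsOneTough {V : Type*} [Fintype V] (G : SimpleGraph V) : Prop :=
  ∀ S : Finset V, 2 ≤ G.numComponentsOutside ↑S → G.numComponentsOutside ↑S ≤ S.card

/-- `G` is traceable: it has a Hamiltonian path. -/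
def SimpleGraph.Traceable {V : Type*} [DecidableEq V] (G : SimpleGraph V) : Prop :=
  ∃ (a b : V) (p : G.Walk a b), p.IsHamiltonian

/-!
A path factor has maximum degree at most two and no isolated vertex, so every isolated vertex of
`G - S` has a neighbour on its path inside `S`, and every vertex of `S` is used by at most two of
them.

Conversely, a partition of `V` into stars with one or two leaves is a path factor, and if
`i(G - S) ≤ k |S|` for all `S` with `k ≥ 2`, then `V` can be partitioned into stars with at most
`k` leaves. Take a packing of such stars covering as many vertices as possible, and suppose that
`w` is uncovered. Every neighbour of an uncovered vertex is then the center of a full star (one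
with `k` leaves), since otherwise the packing could be enlarged. Exchanging leaves along an
alternating chain of stars starting at `w` (a star whose center is adjacent to `w`, then a star
whose center is adjacent to a leaf of the previous one, ...) uncovers any leaf of the last star
and covers `w` instead; as the stars of a chain are distinct, each exchange takes place in a star
left untouched by the earlier ones. So the neighbours of that leaf are centers of full stars as
well. If `S` is the set of centers reached by such chains, then `w` and the `k |S|` leaves of
their stars are isolated in `G - S`.
-/

namespace SimpleGraph

variable {V : Type*} {G : SimpleGraph V} {k : ℕ}

theorem numIsolatedOutside_le_mul_card [Fintype V] (F : G.Subgraph)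
    (hF : ∀ v, ∃ u, F.Adj v u) (hdeg : ∀ v, (F.neighborSet v).ncard ≤ k) (S : Finset V) :
    G.numIsolatedOutside S ≤ k * S.card := by
  classical
  choose nbr hnbr using hF
  rw [numIsolatedOutside, Nat.card_eq_fintype_card, Fintype.card_ofFinset]
  refine Finset.card_le_mul_card_image_of_maps_to (f := nbr)
    (fun v hv => (Finset.mem_filter.1 hv).2.2 _ (F.adj_sub (hnbr v))) k fun s _ => ?_
  calc _ ≤ (F.neighborSet s).ncard := by
        rw [← Set.ncard_coe_finset]
        exact Set.ncard_le_ncard (fun v hv => by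
          obtain ⟨-, rfl⟩ := Finset.mem_filter.1 hv; exact (hnbr v).symm)
    _ ≤ k := hdeg s

theorem pathGraph_neighborSet_nonempty {n : ℕ} (hn : 2 ≤ n) (i : Fin n) :
    ((pathGraph n).neighborSet i).Nonempty := by
  by_cases h : i.val + 1 < n
  · exact ⟨⟨i.val + 1, h⟩, pathGraph_adj.2 (Or.inl rfl)⟩
  · exact ⟨⟨i.val - 1, by omega⟩, pathGraph_adj.2 (Or.inr (by simp only; omega))⟩

theorem pathGraph_ncard_neighborSet_le {n : ℕ} (i : Fin n) :
    ((pathGraph n).neighborSet i).ncard ≤ 2 :=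
  calc ((pathGraph n).neighborSet i).ncard ≤ ({i.val + 1, i.val - 1} : Set ℕ).ncard :=
        Set.ncard_le_ncard_of_injOn Fin.val
          (fun j hj => by rcases pathGraph_adj.1 hj with h | h <;> simp only [Set.mem_insert_iff,
            Set.mem_singleton_iff] <;> omega)
          Fin.val_injective.injOn
    _ ≤ 2 := (Set.ncard_insert_le _ _).trans (by rw [Set.ncard_singleton])

theorem Subgraph.IsPathFactor.exists_ncard_neighborSet_eq {F : G.Subgraph} (hF : F.IsPathFactor)
    (v : V) : ∃ n, 2 ≤ n ∧ ∃ i : Fin n,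
      (F.neighborSet v).ncard = ((pathGraph n).neighborSet i).ncard := by
  let x : F.verts := ⟨v, hF.1 ▸ Set.mem_univ v⟩
  let C := F.coe.connectedComponentMk x
  obtain ⟨n, hn, ⟨φ⟩⟩ := hF.2 C
  refine ⟨n, hn, φ ⟨x, rfl⟩, ?_⟩
  have hsupp : F.coe.neighborSet x ⊆ Set.range ((↑) : C.supp → F.verts) := fun y hy =>
    ⟨⟨y, ConnectedComponent.connectedComponentMk_eq_of_adj hy.symm⟩, rfl⟩
  calc (F.neighborSet v).ncard = (F.coe.neighborSet x).ncard :=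
        Nat.card_congr (F.coeNeighborSetEquiv x).symm
    _ = ((F.coe.induce C.supp).neighborSet ⟨x, rfl⟩).ncard := by
        rw [neighborSet_induce, Set.ncard_preimage_of_injective_subset_range
          Subtype.val_injective hsupp]
    _ = _ := Nat.card_congr (φ.mapNeighborSet _)

theorem Subgraph.IsPathFactor.numIsolatedOutside_le [Fintype V] {F : G.Subgraph}
    (hF : F.IsPathFactor) (S : Finset V) : G.numIsolatedOutside ↑S ≤ 2 * S.card := by
  refine numIsolatedOutside_le_mul_card F (fun v => ?_) (fun v => ?_) S <;>
    obtain ⟨n, hn, i, hi⟩ := hF.exists_ncard_neighborSet_eq v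
  · obtain ⟨u, hu⟩ := Set.nonempty_of_ncard_ne_zero (hi.trans_ne
      ((pathGraph_neighborSet_nonempty hn i).ncard_pos).ne')
    exact ⟨u, hu⟩
  · exact hi ▸ pathGraph_ncard_neighborSet_le i

theorem Subgraph.isPathFactor_of_forall_exists {F : G.Subgraph} (hF : F.verts = Set.univ)
    (h : ∀ v, ∃ n, 2 ≤ n ∧ ∃ g : Fin n → V, Function.Injective g ∧ v ∈ Set.range g ∧
      ∀ i u, F.Adj (g i) u ↔ ∃ j, (pathGraph n).Adj i j ∧ g j = u) :
    F.IsPathFactor := by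
  refine ⟨hF, fun C => ?_⟩
  obtain ⟨x, rfl⟩ := C.exists_rep
  obtain ⟨n, hn, g, hg, ⟨i₀, hi₀⟩, hadj⟩ := h x.1
  let g' : Fin n → F.verts := fun i => ⟨g i, hF ▸ Set.mem_univ _⟩
  have hg' : Function.Injective g' := fun i j hij => hg (congrArg Subtype.val hij)
  have hx : g' i₀ = x := Subtype.ext hi₀
  have hclosed : ∀ y z : F.verts, F.coe.Reachable y z → y ∈ Set.range g' → z ∈ Set.range g' := by
    rintro y z ⟨p⟩
    induction p with
    | nil => exact id
    | cons hyz _ ih =>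
      rintro ⟨i, rfl⟩
      obtain ⟨j, -, hj⟩ := (hadj i _).1 hyz
      exact ih ⟨j, Subtype.ext hj⟩
  have hmem : ∀ y, y ∈ (F.coe.connectedComponentMk x).supp ↔ y ∈ Set.range g' := by
    intro y
    rw [ConnectedComponent.mem_supp_iff, ConnectedComponent.eq]
    refine ⟨fun hyx => hclosed x y hyx.symm ⟨i₀, hx⟩, ?_⟩
    rintro ⟨i, rfl⟩
    rw [← hx]
    exact ((pathGraph_preconnected n i i₀).map
      (⟨g', fun hij => (hadj _ _).2 ⟨_, hij, rfl⟩⟩ : pathGraph n →g F.coe))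
  let e : Fin n ≃ (F.coe.connectedComponentMk x).supp :=
    Equiv.ofBijective (fun i => ⟨g' i, (hmem _).2 ⟨i, rfl⟩⟩)
      ⟨fun i j hij => hg' (congrArg Subtype.val hij),
        fun y => ((hmem y).1 y.2).imp fun i hi => Subtype.ext hi⟩
  refine ⟨n, hn, ⟨(⟨e, fun {i j} => ?_⟩ : pathGraph n ≃g _).symm⟩⟩
  change F.Adj (g i) (g j) ↔ _
  rw [hadj]
  exact ⟨fun ⟨j', hij', hj'⟩ => hg hj' ▸ hij', fun hij => ⟨j, hij, rfl⟩⟩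

structure Star (G : SimpleGraph V) (k : ℕ) where
  center : V
  leaves : Finset V
  adj : ∀ v ∈ leaves, G.Adj center v
  nonempty : leaves.Nonempty
  card_le : leaves.card ≤ k

namespace Star

def verts (s : G.Star k) : Set V := insert s.center s.leaves

theorem center_mem_verts (s : G.Star k) : s.center ∈ s.verts := Set.mem_insert _ _

theorem mem_verts_of_mem_leaves {s : G.Star k} {v : V} (hv : v ∈ s.leaves) : v ∈ s.verts :=
  Set.mem_insert_of_mem _ hv

theorem center_notMem_leaves (s : G.Star k) : s.center ∉ s.leaves :=
  fun h => (s.adj _ h).ne rfl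

def ofAdj {c v : V} (h : G.Adj c v) (hk : 1 ≤ k) : G.Star k where
  center := c
  leaves := {v}
  adj := by simpa using h
  nonempty := Finset.singleton_nonempty v
  card_le := by simpa using hk

theorem verts_ofAdj {c v : V} (h : G.Adj c v) (hk : 1 ≤ k) : (ofAdj h hk).verts = {c, v} := by
  simp [ofAdj, verts]

def Adj (s : G.Star k) (u v : V) : Prop :=
  u = s.center ∧ v ∈ s.leaves ∨ v = s.center ∧ u ∈ s.leaves

theorem Adj.symm {s : G.Star k} {u v : V} (h : s.Adj u v) : s.Adj v u := Or.symm h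

theorem Adj.mem_verts {s : G.Star k} {u v : V} (h : s.Adj u v) : u ∈ s.verts := by
  rcases h with ⟨rfl, -⟩ | ⟨-, hu⟩
  exacts [s.center_mem_verts, Star.mem_verts_of_mem_leaves hu]

variable [DecidableEq V]

def ofAdjPair {c u v : V} (hu : G.Adj c u) (hv : G.Adj c v) (hk : 2 ≤ k) : G.Star k where
  center := c
  leaves := {u, v}
  adj := by simp [hu, hv]
  nonempty := Finset.insert_nonempty _ _
  card_le := (Finset.card_le_two).trans hk

theorem verts_ofAdjPair {c u v : V} (hu : G.Adj c u) (hv : G.Adj c v) (hk : 2 ≤ k) :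
    (ofAdjPair hu hv hk).verts = {c, u, v} := by
  simp [ofAdjPair, verts]

def insertLeaf (s : G.Star k) {v : V} (h : G.Adj s.center v) (hs : s.leaves.card < k) :
    G.Star k where
  center := s.center
  leaves := insert v s.leaves
  adj := by simpa [h] using s.adj
  nonempty := Finset.insert_nonempty _ _
  card_le := (Finset.card_insert_le _ _).trans hs

theorem verts_insertLeaf (s : G.Star k) {v : V} (h : G.Adj s.center v) (hs : s.leaves.card < k) :
    (s.insertLeaf h hs).verts = insert v s.verts := by
  simp [insertLeaf, verts, Set.insert_comm]

def eraseLeaf (s : G.Star k) (v : V) (h : (s.leaves.erase v).Nonempty) : G.Star k where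
  center := s.center
  leaves := s.leaves.erase v
  adj w hw := s.adj w (Finset.mem_of_mem_erase hw)
  nonempty := h
  card_le := (Finset.card_erase_le).trans s.card_le

theorem verts_eraseLeaf (s : G.Star k) {v : V} (hv : v ∈ s.leaves)
    (h : (s.leaves.erase v).Nonempty) : (s.eraseLeaf v h).verts = s.verts \ {v} := by
  have := s.center_notMem_leaves
  ext w; simp only [eraseLeaf, verts, Finset.coe_erase, Set.mem_insert_iff, Set.mem_sdiff,
    Set.mem_singleton_iff, Finset.mem_coe]
  grind

def replaceLeaf (s : G.Star k) {u v : V} (hu : u ∈ s.leaves) (hv : G.Adj s.center v)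
    (hvs : v ∉ s.leaves) : G.Star k where
  center := s.center
  leaves := insert v (s.leaves.erase u)
  adj := by simpa [hv] using fun w _ hw => s.adj w hw
  nonempty := Finset.insert_nonempty _ _
  card_le := by
    rw [Finset.card_insert_of_notMem (fun h => hvs (Finset.mem_of_mem_erase h)),
      Finset.card_erase_add_one hu]
    exact s.card_le

theorem card_leaves_replaceLeaf (s : G.Star k) {u v : V} (hu : u ∈ s.leaves)
    (hv : G.Adj s.center v) (hvs : v ∉ s.leaves) :
    (s.replaceLeaf hu hv hvs).leaves.card = s.leaves.card := by
  rw [replaceLeaf, Finset.card_insert_of_notMem (fun h => hvs (Finset.mem_of_mem_erase h)),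
    Finset.card_erase_add_one hu]

theorem verts_replaceLeaf (s : G.Star k) {u v : V} (hu : u ∈ s.leaves) (hv : G.Adj s.center v)
    (hvs : v ∉ s.leaves) : (s.replaceLeaf hu hv hvs).verts = insert v (s.verts \ {u}) := by
  have := s.center_notMem_leaves
  ext w; simp only [replaceLeaf, verts, Finset.coe_insert, Finset.coe_erase, Set.mem_insert_iff,
    Set.mem_sdiff, Set.mem_singleton_iff, Finset.mem_coe]
  grind

theorem exists_pathGraph (s : G.Star 2) :
    ∃ n, 2 ≤ n ∧ ∃ g : Fin n → V, Function.Injective g ∧ Set.range g = s.verts ∧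
      ∀ i u, s.Adj (g i) u ↔ ∃ j, (pathGraph n).Adj i j ∧ g j = u := by
  have hc := s.center_notMem_leaves
  obtain h1 | h2 : s.leaves.card = 1 ∨ s.leaves.card = 2 := by
    have := s.card_le; have := s.nonempty.card_pos; omega
  · obtain ⟨a, ha⟩ := Finset.card_eq_one.1 h1
    rw [ha] at hc
    refine ⟨2, le_rfl, ![s.center, a], ?_, ?_, ?_⟩
    · intro i j; fin_cases i <;> fin_cases j <;> simp <;> grind
    · ext v; simp [Star.verts, ha]; tauto
    · intro i u; fin_cases i <;> simp [Star.Adj, ha, pathGraph_adj, Fin.exists_fin_two] <;> grind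
  · obtain ⟨a, b, hab, hs⟩ := Finset.card_eq_two.1 h2
    rw [hs] at hc
    refine ⟨3, by norm_num, ![a, s.center, b], ?_, ?_, ?_⟩
    · intro i j; fin_cases i <;> fin_cases j <;> simp <;> grind
    · ext v; simp [Star.verts, hs]; tauto
    · intro i u; fin_cases i <;> simp [Star.Adj, hs, pathGraph_adj, Fin.exists_fin_succ] <;> grind

end Star

def IsStarPacking (𝒮 : Set (G.Star k)) : Prop := 𝒮.PairwiseDisjoint Star.verts

def starCover (𝒮 : Set (G.Star k)) : Set V := ⋃ s ∈ 𝒮, s.verts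

def fullCenters (𝒮 : Set (G.Star k)) : Set V := {c | ∃ s ∈ 𝒮, s.center = c ∧ s.leaves.card = k}

theorem subset_starCover {𝒮 : Set (G.Star k)} {s : G.Star k} (hs : s ∈ 𝒮) :
    s.verts ⊆ starCover 𝒮 :=
  Set.subset_biUnion_of_mem hs

theorem starCover_union (𝒮 𝒯 : Set (G.Star k)) :
    starCover (𝒮 ∪ 𝒯) = starCover 𝒮 ∪ starCover 𝒯 :=
  Set.biUnion_union _ _ _

theorem starCover_empty : starCover (∅ : Set (G.Star k)) = ∅ := Set.biUnion_empty _

theorem starCover_singleton (s : G.Star k) : starCover {s} = s.verts := Set.biUnion_singleton _ _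

theorem starCover_pair (s t : G.Star k) : starCover {s, t} = s.verts ∪ t.verts := by
  simp [starCover]

namespace IsStarPacking

variable {𝒮 R N : Set (G.Star k)}

theorem eq_of_mem_verts (h𝒮 : IsStarPacking 𝒮) {s t : G.Star k} (hs : s ∈ 𝒮) (ht : t ∈ 𝒮)
    {v : V} (hvs : v ∈ s.verts) (hvt : v ∈ t.verts) : s = t :=
  h𝒮.elim hs ht (Set.not_disjoint_iff.2 ⟨v, hvs, hvt⟩)

theorem starCover_diff (h𝒮 : IsStarPacking 𝒮) (hR : R ⊆ 𝒮) :
    starCover (𝒮 \ R) = starCover 𝒮 \ starCover R := by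
  ext v
  simp only [starCover, Set.mem_sdiff, Set.mem_iUnion, exists_prop, not_exists, not_and]
  constructor
  · rintro ⟨s, ⟨hs, hsR⟩, hv⟩
    exact ⟨⟨s, hs, hv⟩, fun r hr hvr => hsR (h𝒮.eq_of_mem_verts hs (hR hr) hv hvr ▸ hr)⟩
  · rintro ⟨⟨s, hs, hv⟩, hvR⟩
    exact ⟨s, ⟨hs, fun hsR => hvR s hsR hv⟩, hv⟩

theorem replace (h𝒮 : IsStarPacking 𝒮) (hR : R ⊆ 𝒮) (hN : IsStarPacking N)
    (hNR : starCover N ⊆ starCover R ∪ (starCover 𝒮)ᶜ) : IsStarPacking (𝒮 \ R ∪ N) := by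
  refine (h𝒮.subset Set.sdiff_subset).union hN fun s hs t ht _ => ?_
  have hs' : s.verts ⊆ starCover (𝒮 \ R) := subset_starCover hs
  rw [h𝒮.starCover_diff hR] at hs'
  refine Set.disjoint_left.2 fun v hvs hvt => ?_
  rcases hNR (subset_starCover ht hvt) with hv | hv
  · exact (hs' hvs).2 hv
  · exact hv (hs' hvs).1

theorem starCover_replace (h𝒮 : IsStarPacking 𝒮) (hR : R ⊆ 𝒮) :
    starCover (𝒮 \ R ∪ N) = starCover 𝒮 \ starCover R ∪ starCover N := by
  rw [starCover_union, h𝒮.starCover_diff hR]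

theorem card_leaves_of_mem_fullCenters (h𝒮 : IsStarPacking 𝒮) {s : G.Star k} (hs : s ∈ 𝒮)
    (hc : s.center ∈ fullCenters 𝒮) : s.leaves.card = k := by
  obtain ⟨t, ht, htc, htk⟩ := hc
  rwa [h𝒮.eq_of_mem_verts hs ht s.center_mem_verts (htc ▸ t.center_mem_verts)]

theorem exists_swap [DecidableEq V] (h𝒮 : IsStarPacking 𝒮) {s : G.Star k} (hs : s ∈ 𝒮) {x b : V}
    (hx : x ∉ starCover 𝒮) (hxs : G.Adj s.center x) (hb : b ∈ s.leaves) :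
    ∃ 𝒯, IsStarPacking 𝒯 ∧ starCover 𝒯 = insert x (starCover 𝒮 \ {b}) ∧
      fullCenters 𝒯 ⊆ fullCenters 𝒮 ∧ ∀ t ∈ 𝒮, t ≠ s → t ∈ 𝒯 := by
  have hxl : x ∉ s.leaves := fun h => hx (subset_starCover hs (Star.mem_verts_of_mem_leaves h))
  have hsub : ({s} : Set (G.Star k)) ⊆ 𝒮 := Set.singleton_subset_iff.2 hs
  let s' := s.replaceLeaf hb hxs hxl
  have hcov : starCover ({s'} : Set (G.Star k)) = insert x (s.verts \ {b}) := by
    rw [starCover_singleton, Star.verts_replaceLeaf]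
  refine ⟨𝒮 \ {s} ∪ {s'}, h𝒮.replace hsub (Set.pairwiseDisjoint_singleton _ _) ?_, ?_, ?_, ?_⟩
  · rw [hcov, starCover_singleton]
    grind
  · rw [h𝒮.starCover_replace hsub, hcov, starCover_singleton]
    have := subset_starCover hs
    have := Star.mem_verts_of_mem_leaves hb
    grind
  · rintro c ⟨t, ht | rfl, rfl, htk⟩
    · exact ⟨t, ht.1, rfl, htk⟩
    · exact ⟨s, hs, rfl, (s.card_leaves_replaceLeaf hb hxs hxl).symm.trans htk⟩
  · exact fun t ht hts => Or.inl ⟨ht, hts⟩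

theorem mul_card_lt_numIsolatedOutside [Finite V] [DecidableEq V] (h𝒮 : IsStarPacking 𝒮)
    {R : Finset (G.Star k)} (hR : ↑R ⊆ 𝒮) (hfull : ∀ s ∈ R, s.leaves.card = k) {w : V}
    (hw : w ∉ starCover 𝒮)
    (hiso : ∀ v ∈ insert w (R.biUnion Star.leaves), ∀ y, G.Adj v y → y ∈ R.image Star.center) :
    k * (R.image Star.center).card < G.numIsolatedOutside ↑(R.image Star.center) := by
  have hverts : ∀ s ∈ R, ∀ t ∈ R, ∀ v ∈ s.verts, v ∈ t.verts → s = t :=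
    fun s hs t ht v hvs hvt => h𝒮.eq_of_mem_verts (hR hs) (hR ht) hvs hvt
  have hS : (R.image Star.center).card = R.card := Finset.card_image_of_injOn
    fun s hs t ht h => hverts s hs t ht _ s.center_mem_verts (h ▸ t.center_mem_verts)
  have hT : (R.biUnion Star.leaves).card = k * R.card := by
    rw [Finset.card_biUnion fun s hs t ht hst => Finset.disjoint_left.2 fun v hvs hvt =>
      hst (hverts s hs t ht v (Star.mem_verts_of_mem_leaves hvs)
        (Star.mem_verts_of_mem_leaves hvt)),
      Finset.sum_congr rfl hfull, Finset.sum_const, smul_eq_mul, mul_comm]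
  have hwT : w ∉ R.biUnion Star.leaves := fun h => by
    obtain ⟨s, hs, hws⟩ := Finset.mem_biUnion.1 h
    exact hw (subset_starCover (hR hs) (Star.mem_verts_of_mem_leaves hws))
  have hnotS : ∀ v ∈ insert w (R.biUnion Star.leaves), v ∉ R.image Star.center := by
    intro v hv hvS
    obtain ⟨s, hs, rfl⟩ := Finset.mem_image.1 hvS
    rcases Finset.mem_insert.1 hv with rfl | hv
    · exact hw (subset_starCover (hR hs) s.center_mem_verts)
    · obtain ⟨t, ht, hvt⟩ := Finset.mem_biUnion.1 hv
      obtain rfl := hverts s hs t ht _ s.center_mem_verts (Star.mem_verts_of_mem_leaves hvt)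
      exact s.center_notMem_leaves hvt
  calc k * (R.image Star.center).card < (insert w (R.biUnion Star.leaves)).card := by
        rw [Finset.card_insert_of_notMem hwT, hT, hS]; omega
    _ = (↑(insert w (R.biUnion Star.leaves)) : Set V).ncard := (Set.ncard_coe_finset _).symm
    _ ≤ G.numIsolatedOutside ↑(R.image Star.center) := by
        rw [numIsolatedOutside, Nat.card_coe_set_eq]
        exact Set.ncard_le_ncard fun v hv => ⟨hnotS v hv, fun y hy => hiso v hv y hy⟩

end IsStarPacking

/-- Chains of distinct stars reaching out from `w`, listed from the far end. -/
inductive IsAlternatingChain (𝒮 : Set (G.Star k)) (w : V) : List (G.Star k) → Prop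
  | single {s : G.Star k} : s ∈ 𝒮 → G.Adj w s.center → IsAlternatingChain 𝒮 w [s]
  | cons {s t : G.Star k} {l : List (G.Star k)} {a : V} : IsAlternatingChain 𝒮 w (s :: l) →
      a ∈ s.leaves → t ∈ 𝒮 → G.Adj a t.center → t ∉ s :: l → IsAlternatingChain 𝒮 w (t :: s :: l)

namespace IsAlternatingChain

variable {𝒮 : Set (G.Star k)} {w : V}

theorem mem {L : List (G.Star k)} (hL : IsAlternatingChain 𝒮 w L) {s : G.Star k} (hs : s ∈ L) :
    s ∈ 𝒮 := by
  induction hL with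
  | single h => rwa [List.mem_singleton.1 hs]
  | cons _ _ ht _ _ ih => exact (List.mem_cons.1 hs).elim (· ▸ ht) ih

theorem exists_of_mem {L : List (G.Star k)} (hL : IsAlternatingChain 𝒮 w L) {s : G.Star k}
    (hs : s ∈ L) : ∃ l, IsAlternatingChain 𝒮 w (s :: l) := by
  induction hL with
  | single h hadj => exact ⟨[], List.mem_singleton.1 hs ▸ single h hadj⟩
  | cons hch ha ht hadj hnot ih =>
    exact (List.mem_cons.1 hs).elim (fun h => ⟨_, h ▸ cons hch ha ht hadj hnot⟩) ih

theorem extend {s t : G.Star k} {l : List (G.Star k)} (hL : IsAlternatingChain 𝒮 w (s :: l))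
    {a : V} (ha : a ∈ s.leaves) (ht : t ∈ 𝒮) (hadj : G.Adj a t.center) :
    ∃ l', IsAlternatingChain 𝒮 w (t :: l') := by
  by_cases htL : t ∈ s :: l
  · exact hL.exists_of_mem htL
  · exact ⟨_, cons hL ha ht hadj htL⟩

theorem exists_swap [DecidableEq V] (h𝒮 : IsStarPacking 𝒮) (hw : w ∉ starCover 𝒮)
    {L : List (G.Star k)} (hL : IsAlternatingChain 𝒮 w L) {s : G.Star k} (hs : L.head? = some s)
    {a : V} (ha : a ∈ s.leaves) :
    ∃ 𝒯, IsStarPacking 𝒯 ∧ (starCover 𝒯).ncard = (starCover 𝒮).ncard ∧ a ∉ starCover 𝒯 ∧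
      fullCenters 𝒯 ⊆ fullCenters 𝒮 ∧ ∀ t ∈ 𝒮, t ∉ L → t ∈ 𝒯 := by
  induction hL generalizing s a with
  | single hs𝒮 hadj =>
    obtain rfl : _ = s := Option.some_injective _ hs
    obtain ⟨𝒯, h𝒯, hcov, hfull, hkeep⟩ := h𝒮.exists_swap hs𝒮 hw hadj.symm ha
    have haC := subset_starCover hs𝒮 (Star.mem_verts_of_mem_leaves ha)
    refine ⟨𝒯, h𝒯, ?_, ?_, hfull, fun t ht htL => hkeep t ht (List.ne_of_not_mem_cons htL)⟩
    · rw [hcov, Set.ncard_exchange hw haC]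
    · rw [hcov]; grind
  | @cons s₀ t l a₀ hch ha₀ ht hadj htL ih =>
    obtain rfl : t = s := Option.some_injective _ hs
    obtain ⟨𝒯₁, h𝒯₁, hcard₁, ha₀₁, hfull₁, hkeep₁⟩ := ih rfl ha₀
    have ht₁ : t ∈ 𝒯₁ := hkeep₁ t ht htL
    obtain ⟨𝒯₂, h𝒯₂, hcov₂, hfull₂, hkeep₂⟩ := h𝒯₁.exists_swap ht₁ ha₀₁ hadj.symm ha
    have haC := subset_starCover ht₁ (Star.mem_verts_of_mem_leaves ha)
    have haa₀ : a ≠ a₀ := by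
      rintro rfl
      have := h𝒮.eq_of_mem_verts ht (hch.mem (List.mem_cons_self ..))
        (Star.mem_verts_of_mem_leaves ha) (Star.mem_verts_of_mem_leaves ha₀)
      exact htL (this ▸ List.mem_cons_self ..)
    refine ⟨𝒯₂, h𝒯₂, ?_, ?_, hfull₂.trans hfull₁, fun t' ht' ht'L => ?_⟩
    · rw [hcov₂, Set.ncard_exchange ha₀₁ haC, hcard₁]
    · rw [hcov₂]; grind
    · exact hkeep₂ t' (hkeep₁ t' ht' (fun h => ht'L (List.mem_cons_of_mem _ h)))
        (List.ne_of_not_mem_cons ht'L)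

end IsAlternatingChain

def IsMaxStarPacking (𝒮 : Set (G.Star k)) : Prop :=
  IsStarPacking 𝒮 ∧
    ∀ 𝒯 : Set (G.Star k), IsStarPacking 𝒯 → (starCover 𝒯).ncard ≤ (starCover 𝒮).ncard


theorem exists_isMaxStarPacking [Finite V] : ∃ 𝒮 : Set (G.Star k), IsMaxStarPacking 𝒮 := by
  let A : Set ℕ := {n | ∃ 𝒮 : Set (G.Star k), IsStarPacking 𝒮 ∧ (starCover 𝒮).ncard = n}
  have hbdd : BddAbove A := ⟨Nat.card V, by
    rintro _ ⟨𝒮, -, rfl⟩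
    exact Set.ncard_le_card _⟩
  have hne : A.Nonempty := ⟨0, ∅, Set.pairwiseDisjoint_empty, by
    rw [starCover_empty, Set.ncard_empty]⟩
  obtain ⟨𝒮, h𝒮, hsup⟩ := Nat.sSup_mem hne hbdd
  exact ⟨𝒮, h𝒮, fun 𝒯 h𝒯 => hsup ▸ le_csSup hbdd ⟨𝒯, h𝒯, rfl⟩⟩

namespace IsMaxStarPacking

variable [Finite V] {𝒮 R N : Set (G.Star k)} {w : V}

theorem not_insert_subset_starCover (h𝒮 : IsMaxStarPacking 𝒮) (hR : R ⊆ 𝒮)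
    (hN : IsStarPacking N) (hNR : starCover N ⊆ starCover R ∪ (starCover 𝒮)ᶜ) {a : V}
    (ha : a ∉ starCover 𝒮) : ¬ insert a (starCover R) ⊆ starCover N := by
  intro hRN
  have hsub : insert a (starCover 𝒮) ⊆ starCover (𝒮 \ R ∪ N) := by
    rw [h𝒮.1.starCover_replace hR]
    intro v hv
    by_cases hvR : v ∈ starCover R
    · exact Or.inr (hRN (Set.mem_insert_of_mem _ hvR))
    · rcases hv with rfl | hv
      · exact Or.inr (hRN (Set.mem_insert _ _))
      · exact Or.inl ⟨hv, hvR⟩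
  have hlt := Set.ncard_lt_ncard ((Set.ssubset_insert ha).trans_subset hsub)
  exact (h𝒮.2 _ (h𝒮.1.replace hR hN hNR)).not_gt hlt

theorem mem_fullCenters_of_adj (hk : 2 ≤ k) (h𝒮 : IsMaxStarPacking 𝒮) {a y : V}
    (ha : a ∉ starCover 𝒮) (hay : G.Adj a y) : y ∈ fullCenters 𝒮 := by
  classical
  by_contra hy
  by_cases hyc : y ∈ starCover 𝒮
  · obtain ⟨s, hs, hys⟩ : ∃ s ∈ 𝒮, y ∈ s.verts := by simpa [starCover] using hyc
    have hsub : ({s} : Set (G.Star k)) ⊆ 𝒮 := Set.singleton_subset_iff.2 hs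
    have has : a ∉ s.verts := fun h => ha (subset_starCover hs h)
    rcases hys with rfl | hyl
    · have hlt : s.leaves.card < k := s.card_le.lt_of_ne fun h => hy ⟨s, hs, rfl, h⟩
      refine h𝒮.not_insert_subset_starCover hsub
        (Set.pairwiseDisjoint_singleton (s.insertLeaf hay.symm hlt) _) ?_ ha ?_ <;>
        intro v <;> simp [starCover_singleton, Star.verts_insertLeaf]
      grind
    · have hys : G.Adj y s.center := (s.adj y hyl).symm
      by_cases hsy : (s.leaves.erase y).Nonempty
      · have hN :
            IsStarPacking {s.eraseLeaf y hsy, Star.ofAdj hay.symm (by omega : 1 ≤ k)} := by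
          refine (Set.pairwiseDisjoint_singleton _ _).insert fun t ht _ => ?_
          rw [Set.mem_singleton_iff.1 ht, Star.verts_eraseLeaf s hyl, Star.verts_ofAdj]
          exact Set.disjoint_left.2 fun v hv hv' => by grind
        refine h𝒮.not_insert_subset_starCover hsub hN ?_ ha ?_ <;> intro v <;>
          simp [starCover_pair, starCover_singleton, Star.verts_eraseLeaf s hyl,
            Star.verts_ofAdj] <;> grind [Star.mem_verts_of_mem_leaves hyl]
      · -- the star is the edge `s.center y`: recenter it at `y`, which takes `a` as a second leaf
        have hsv : s.verts = {s.center, y} := by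
          rw [Finset.not_nonempty_iff_eq_empty, Finset.erase_eq_empty_iff] at hsy
          simp [Star.verts, hsy.resolve_left s.nonempty.ne_empty]
        refine h𝒮.not_insert_subset_starCover hsub
          (Set.pairwiseDisjoint_singleton (Star.ofAdjPair hay.symm hys hk) _) ?_ ha ?_ <;>
          intro v <;> simp [starCover_singleton, Star.verts_ofAdjPair, hsv] <;> grind
  · have hN : IsStarPacking {Star.ofAdj hay.symm (by omega : 1 ≤ k)} :=
      Set.pairwiseDisjoint_singleton _ _
    refine h𝒮.not_insert_subset_starCover (Set.empty_subset _) hN ?_ ha ?_ <;>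
      intro v <;> simp [starCover_singleton, Star.verts_ofAdj, starCover_empty] <;> grind

theorem mem_fullCenters_of_chain (hk : 2 ≤ k) (h𝒮 : IsMaxStarPacking 𝒮)
    (hw : w ∉ starCover 𝒮) {s : G.Star k} {l : List (G.Star k)}
    (hL : IsAlternatingChain 𝒮 w (s :: l)) {a y : V} (ha : a ∈ s.leaves) (hay : G.Adj a y) :
    y ∈ fullCenters 𝒮 := by
  classical
  obtain ⟨𝒯, h𝒯, hcard, ha𝒯, hfull, -⟩ := hL.exists_swap h𝒮.1 hw rfl ha
  exact hfull (mem_fullCenters_of_adj hk ⟨h𝒯, hcard ▸ h𝒮.2⟩ ha𝒯 hay)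

theorem card_leaves_of_chain (hk : 2 ≤ k) (h𝒮 : IsMaxStarPacking 𝒮)
    (hw : w ∉ starCover 𝒮) {L : List (G.Star k)} (hL : IsAlternatingChain 𝒮 w L)
    {s : G.Star k} (hs : L.head? = some s) : s.leaves.card = k := by
  cases hL with
  | single hs𝒮 hadj =>
    obtain rfl : _ = s := Option.some_injective _ hs
    exact h𝒮.1.card_leaves_of_mem_fullCenters hs𝒮 (mem_fullCenters_of_adj hk h𝒮 hw hadj)
  | cons hch ha ht hadj _ =>
    obtain rfl : _ = s := Option.some_injective _ hs
    exact h𝒮.1.card_leaves_of_mem_fullCenters ht (mem_fullCenters_of_chain hk h𝒮 hw hch ha hadj)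

theorem starCover_eq_univ (hk : 2 ≤ k)
    (H : ∀ S : Finset V, G.numIsolatedOutside ↑S ≤ k * S.card) (h𝒮 : IsMaxStarPacking 𝒮) :
    starCover 𝒮 = Set.univ := by
  classical
  refine Set.eq_univ_of_forall fun w => ?_
  by_contra hw
  let 𝓡 : Set (G.Star k) := {s | ∃ l, IsAlternatingChain 𝒮 w (s :: l)}
  have h𝓡 : 𝓡 ⊆ 𝒮 := fun s ⟨_, hl⟩ => hl.mem (List.mem_cons_self ..)
  have hfin : 𝓡.Finite := Set.Finite.of_finite_image (f := Star.center) (Set.toFinite _)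
    fun s hs t ht h => h𝒮.1.eq_of_mem_verts (h𝓡 hs) (h𝓡 ht) s.center_mem_verts
      (h ▸ t.center_mem_verts)
  refine (H _).not_gt (h𝒮.1.mul_card_lt_numIsolatedOutside (R := hfin.toFinset)
    (by simpa using h𝓡) (fun s hs => ?_) hw fun v hv y hy => ?_)
  · obtain ⟨l, hl⟩ := hfin.mem_toFinset.1 hs
    exact h𝒮.card_leaves_of_chain hk hw hl rfl
  rcases Finset.mem_insert.1 hv with rfl | hv
  · obtain ⟨t, ht, rfl, -⟩ := mem_fullCenters_of_adj hk h𝒮 hw hy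
    exact Finset.mem_image.2 ⟨t, hfin.mem_toFinset.2 ⟨[], .single ht hy⟩, rfl⟩
  · obtain ⟨s, hs, hvs⟩ := Finset.mem_biUnion.1 hv
    obtain ⟨l, hl⟩ := hfin.mem_toFinset.1 hs
    obtain ⟨t, ht, rfl, -⟩ := mem_fullCenters_of_chain hk h𝒮 hw hl hvs hy
    exact Finset.mem_image.2 ⟨t, hfin.mem_toFinset.2 (hl.extend hvs ht hy), rfl⟩

end IsMaxStarPacking

def starSubgraph (𝒮 : Set (G.Star k)) : G.Subgraph where
  verts := starCover 𝒮
  Adj u v := ∃ s ∈ 𝒮, s.Adj u v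
  adj_sub := by
    rintro u v ⟨s, -, ⟨rfl, hv⟩ | ⟨rfl, hu⟩⟩
    exacts [s.adj v hv, (s.adj u hu).symm]
  edge_vert := fun ⟨s, hs, h⟩ => subset_starCover hs h.mem_verts
  symm := ⟨fun _ _ ⟨s, hs, h⟩ => ⟨s, hs, h.symm⟩⟩

theorem starSubgraph_adj {𝒮 : Set (G.Star k)} {u v : V} :
    (starSubgraph 𝒮).Adj u v ↔ ∃ s ∈ 𝒮, s.Adj u v := Iff.rfl

theorem IsStarPacking.starSubgraph_adj_iff {𝒮 : Set (G.Star k)} (h𝒮 : IsStarPacking 𝒮)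
    {s : G.Star k} (hs : s ∈ 𝒮) {u v : V} (hu : u ∈ s.verts) :
    (starSubgraph 𝒮).Adj u v ↔ s.Adj u v := by
  rw [starSubgraph_adj]
  exact ⟨fun ⟨t, ht, h⟩ => h𝒮.eq_of_mem_verts ht hs h.mem_verts hu ▸ h, fun h => ⟨s, hs, h⟩⟩

theorem IsStarPacking.isPathFactor_starSubgraph {𝒮 : Set (G.Star 2)} (h𝒮 : IsStarPacking 𝒮)
    (hcov : starCover 𝒮 = Set.univ) : (starSubgraph 𝒮).IsPathFactor := by
  classical
  refine Subgraph.isPathFactor_of_forall_exists hcov fun v => ?_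
  obtain ⟨s, hs, hv⟩ : ∃ s ∈ 𝒮, v ∈ s.verts := by
    simpa [starCover] using (hcov.symm ▸ Set.mem_univ v : v ∈ starCover 𝒮)
  obtain ⟨n, hn, g, hg, hrange, hadj⟩ := s.exists_pathGraph
  refine ⟨n, hn, g, hg, hrange ▸ hv, fun i u => ?_⟩
  rw [h𝒮.starSubgraph_adj_iff hs (hrange ▸ ⟨i, rfl⟩), hadj]

end SimpleGraph

theorem stmt1 {V : Type*} [Fintype V] (G : SimpleGraph V) :
    G.HasPathFactor ↔ ∀ S : Finset V, G.numIsolatedOutside ↑S ≤ 2 * S.card := by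
  refine ⟨fun ⟨F, hF⟩ => hF.numIsolatedOutside_le, fun H => ?_⟩
  obtain ⟨𝒮, h𝒮⟩ := exists_isMaxStarPacking (G := G) (k := 2)
  exact ⟨_, h𝒮.1.isPathFactor_starSubgraph (h𝒮.starCover_eq_univ le_rfl H)⟩
end

section
/- If G is a finite simple graph with minimum degree δ(G) ≥ |V(G)|/3, then G has a path factor. -/
open SimpleGraph

/-!
Take a matching `M` whose vertex set is maximal among matchings. No two unmatched vertices are
adjacent, and for unmatched `u ≠ v` and `xy ∈ M` we cannot have both `u ~ x` and `v ~ y`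
(replace `xy` by `ux, vy`). So the partners of the neighbours of `u` avoid the neighbours of `v`,
whence `deg u + deg v ≤ |V(M)|`; with `|V| ≤ 3δ` this leaves at most `δ` unmatched vertices.
By Hall's theorem the unmatched vertices can then be attached to distinct matched neighbours,
and each edge of `M` together with its at most two attached vertices is a path on 2, 3 or 4
vertices.
-/

namespace SimpleGraph

open Finset

variable {V W W' : Type*}

section InducesPath

variable {H : SimpleGraph W} {H' : SimpleGraph W'} {l : List W}

def InducesPath (H : SimpleGraph W) (l : List W) : Prop :=
  l.Nodup ∧ ∀ i j : Fin l.length, H.Adj l[i] l[j] ↔ (i : ℕ) + 1 = j ∨ (j : ℕ) + 1 = i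

theorem InducesPath.map_iso (hl : H.InducesPath l) (φ : H ≃g H') : H'.InducesPath (l.map φ) := by
  refine ⟨hl.1.map φ.injective, fun i j => ?_⟩
  simpa [φ.map_adj_iff] using hl.2 (i.cast (List.length_map _)) (j.cast (List.length_map _))

theorem InducesPath.nonempty_induce_iso_pathGraph (hl : H.InducesPath l) :
    Nonempty (H.induce {x | x ∈ l} ≃g pathGraph l.length) := by
  classical
  refine ⟨(RelIso.mk (hl.1.getEquiv l) fun {i j} => ?_).symm⟩
  simpa [List.Nodup.getEquiv, pathGraph_adj] using hl.2 i j

theorem ConnectedComponent.exists_induce_supp_iso_pathGraph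
    (h : ∀ v, ∃ l : List W, v ∈ l ∧ 2 ≤ l.length ∧ H.InducesPath l ∧
      ∀ x ∈ l, ∀ y, H.Adj x y → y ∈ l)
    (c : H.ConnectedComponent) : ∃ k, 2 ≤ k ∧ Nonempty (H.induce c.supp ≃g pathGraph k) := by
  induction c using ConnectedComponent.ind with | h v => ?_
  obtain ⟨l, hvl, hlen, hl, hclosed⟩ := h v
  obtain ⟨e⟩ := hl.nonempty_induce_iso_pathGraph
  have hconn : (H.induce {x | x ∈ l}).Connected := by
    obtain ⟨k, hk⟩ : ∃ k, l.length = k + 1 := ⟨l.length - 1, by omega⟩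
    exact e.symm.connected_iff.1 (hk ▸ pathGraph_connected k)
  obtain ⟨c, hc⟩ := (connected_induce_iff.1 hconn).exists_verts_eq_connectedComponentSupp
    fun x hx y hxy => ⟨hx, hclosed x hx y hxy, hxy⟩
  rw [Subgraph.induce_verts] at hc
  have hsupp : (H.connectedComponentMk v).supp = {x | x ∈ l} := by
    rw [hc, ConnectedComponent.eq_of_common_vertex (hc ▸ hvl : v ∈ c.supp) rfl]
  exact ⟨l.length, hlen, hsupp ▸ ⟨e⟩⟩

end InducesPath

theorem Subgraph.isPathFactor_of_forall_exists_inducesPath {G : SimpleGraph V} (F : G.Subgraph)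
    (hF : F.IsSpanning)
    (h : ∀ v, ∃ l : List V, v ∈ l ∧ 2 ≤ l.length ∧ F.spanningCoe.InducesPath l ∧
      ∀ x ∈ l, ∀ y, F.Adj x y → y ∈ l) :
    F.IsPathFactor := by
  refine ⟨isSpanning_iff.1 hF, ConnectedComponent.exists_induce_supp_iso_pathGraph fun v => ?_⟩
  let φ := F.spanningCoeEquivCoeOfSpanning hF
  obtain ⟨l, hvl, hlen, hl, hclosed⟩ := h v
  refine ⟨l.map φ, List.mem_map.2 ⟨v, hvl, rfl⟩, by simpa using hlen, hl.map_iso φ, ?_⟩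
  simp only [List.mem_map, forall_exists_index, and_imp]
  rintro _ x hx rfl y hxy
  exact ⟨y, hclosed x hx y hxy, rfl⟩

namespace Subgraph

variable {G : SimpleGraph V} {M : G.Subgraph} {s : Set V} {u v w x y : V}

theorem isMatching_bot : (⊥ : G.Subgraph).IsMatching := fun _ h => h.elim

theorem IsMatching.deleteVerts (hM : M.IsMatching) (hs : ∀ a ∈ s, ∀ b, M.Adj a b → b ∈ s) :
    (M.deleteVerts s).IsMatching := by
  rintro v ⟨hv, hvs⟩
  obtain ⟨w, hvw, huniq⟩ := hM hv
  have hws : w ∉ s := fun hws => hvs (hs w hws v hvw.symm)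
  exact ⟨w, by simp [hv, hvs, M.edge_vert hvw.symm, hws, hvw],
    fun z hz => huniq z (deleteVerts_adj.1 hz).2.2.2.2⟩

theorem not_adj_of_notMem_verts (hM : MaximalFor IsMatching verts M) (hu : u ∉ M.verts)
    (hw : w ∉ M.verts) : ¬G.Adj u w := by
  intro huw
  have hM' : (M ⊔ G.subgraphOfAdj huw).IsMatching := by
    refine hM.1.sup (.subgraphOfAdj huw) ?_
    rw [hM.1.support_eq_verts, (IsMatching.subgraphOfAdj huw).support_eq_verts,
      subgraphOfAdj_verts, Set.disjoint_insert_right, Set.disjoint_singleton_right]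
    exact ⟨hu, hw⟩
  exact hu (hM.2 hM' le_sup_left (Or.inr (by simp)))

theorem not_adj_of_adj_of_notMem_verts (hM : MaximalFor IsMatching verts M) (hxy : M.Adj x y)
    (hu : u ∉ M.verts) (hv : v ∉ M.verts) (huv : u ≠ v) (hux : G.Adj u x) : ¬G.Adj v y := by
  intro hvy
  have hx := M.edge_vert hxy
  have hy := M.edge_vert hxy.symm
  have hdel : (M.deleteVerts {x, y}).IsMatching := hM.1.deleteVerts <| by
    rintro a (rfl | rfl) b hab
    · exact Or.inr (hM.1.eq_of_adj_left hxy hab).symm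
    · exact Or.inl (hM.1.eq_of_adj_left hxy.symm hab).symm
  have hdel_ux : (M.deleteVerts {x, y} ⊔ G.subgraphOfAdj hux).IsMatching := by
    refine hdel.sup (.subgraphOfAdj hux) ?_
    rw [hdel.support_eq_verts, (IsMatching.subgraphOfAdj hux).support_eq_verts]
    simp only [deleteVerts_verts, subgraphOfAdj_verts, Set.disjoint_insert_right,
      Set.disjoint_singleton_right]
    grind
  have hM' := hdel_ux.sup (.subgraphOfAdj hvy) <| by
    rw [hdel_ux.support_eq_verts, (IsMatching.subgraphOfAdj hvy).support_eq_verts]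
    simp only [verts_sup, deleteVerts_verts, subgraphOfAdj_verts, Set.disjoint_insert_right,
      Set.disjoint_singleton_right]
    have := hxy.ne
    grind
  refine hu (hM.2 hM' (fun z hz => ?_) (by simp))
  simp only [verts_sup, deleteVerts_verts, subgraphOfAdj_verts]
  grind

theorem degree_add_degree_le_ncard_verts [Fintype V] [DecidableRel G.Adj]
    (hM : MaximalFor IsMatching verts M) (hu : u ∉ M.verts) (hv : v ∉ M.verts) (huv : u ≠ v) :
    G.degree u + G.degree v ≤ M.verts.ncard := by
  classical
  have hN : ∀ {w}, w ∉ M.verts → G.neighborFinset w ⊆ M.verts.toFinset := fun hw z hz => by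
    by_contra hz'
    exact not_adj_of_notMem_verts hM hw (by simpa using hz') ((G.mem_neighborFinset _ _).1 hz)
  have hmates : #(G.neighborFinset u) ≤ #(M.verts.toFinset \ G.neighborFinset v) := by
    refine card_le_card_of_forall_subsingleton M.Adj (fun x hx => ?_)
      fun y _ x₁ hx₁ x₂ hx₂ => hM.1.eq_of_adj_right hx₁.2 hx₂.2
    obtain ⟨y, hxy, -⟩ := hM.1 (by simpa using hN hu hx)
    refine ⟨y, ?_, hxy⟩
    simpa [M.edge_vert hxy.symm] using
      not_adj_of_adj_of_notMem_verts hM hxy hu hv huv ((G.mem_neighborFinset _ _).1 hx)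
  rw [card_sdiff_of_subset (hN hv), ← Set.ncard_eq_toFinset_card'] at hmates
  have := (card_le_card (hN hv)).trans_eq (Set.ncard_eq_toFinset_card' _).symm
  simp only [card_neighborFinset_eq_degree] at hmates this
  omega

theorem ncard_compl_verts_le_minDegree [Fintype V] [DecidableRel G.Adj]
    (hM : MaximalFor IsMatching verts M) (h : Fintype.card V ≤ 3 * G.minDegree) :
    M.vertsᶜ.ncard ≤ G.minDegree := by
  by_cases hU : M.vertsᶜ.ncard ≤ 1
  · rcases Nat.le_one_iff_eq_zero_or_eq_one.1 hU with h0 | h1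
    · omega
    · obtain ⟨v, -⟩ := Set.ncard_eq_one.1 h1
      have := Fintype.card_pos_iff.2 ⟨v⟩
      omega
  · obtain ⟨u, v, hu, hv, huv⟩ := (Set.one_lt_ncard_iff (s := M.vertsᶜ)).1 (by omega)
    have hdeg := degree_add_degree_le_ncard_verts hM hu hv huv
    have hcard := Set.ncard_add_ncard_compl M.verts
    rw [Nat.card_eq_fintype_card] at hcard
    have := G.minDegree_le_degree u
    have := G.minDegree_le_degree v
    omega

end Subgraph

theorem exists_injOn_adj_of_ncard_le_minDegree {G : SimpleGraph V} [Fintype V]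
    [DecidableRel G.Adj] (s : Set V) (hs : s.ncard ≤ G.minDegree) :
    ∃ f : V → V, (∀ u ∈ s, G.Adj u (f u)) ∧ s.InjOn f := by
  classical
  have hall : ∀ A : Finset s, #A ≤ #(A.biUnion fun u => G.neighborFinset u) := by
    intro A
    obtain rfl | ⟨u, hu⟩ := A.eq_empty_or_nonempty
    · simp
    calc #A ≤ Fintype.card s := card_le_univ A
      _ = s.ncard := by rw [← Nat.card_eq_fintype_card, Nat.card_coe_set_eq]
      _ ≤ G.degree u := hs.trans (G.minDegree_le_degree u)
      _ ≤ _ := by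
        rw [← card_neighborFinset_eq_degree]
        exact card_le_card (subset_biUnion_of_mem (fun u : s => G.neighborFinset u) hu)
  obtain ⟨g, hg_inj, hg_adj⟩ := (all_card_le_biUnion_card_iff_exists_injective _).1 hall
  refine ⟨fun v => if hv : v ∈ s then g ⟨v, hv⟩ else v, fun u hu => ?_, fun u hu v hv huv => ?_⟩
  · simpa [hu] using hg_adj ⟨u, hu⟩
  · simpa using @hg_inj ⟨u, hu⟩ ⟨v, hv⟩ (by simpa [hu, hv] using huv)

namespace Subgraph

variable {G : SimpleGraph V} {M : G.Subgraph} {f : V → V} {a a' u z : V}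

def withPendants (M : G.Subgraph) (f : V → V) (hf : ∀ u ∉ M.verts, G.Adj u (f u)) :
    G.Subgraph where
  verts := Set.univ
  Adj v w := M.Adj v w ∨ (v ∉ M.verts ∧ f v = w) ∨ (w ∉ M.verts ∧ f w = v)
  adj_sub := by
    rintro v w (hvw | ⟨hv, rfl⟩ | ⟨hw, rfl⟩)
    exacts [hvw.adj_sub, hf v hv, (hf w hw).symm]
  edge_vert _ := Set.mem_univ _
  symm := ⟨fun _ _ => by
    rintro (hvw | h | h)
    exacts [.inl hvw.symm, .inr (.inr h), .inr (.inl h)]⟩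

variable {hf : ∀ u ∉ M.verts, G.Adj u (f u)}

@[simp]
theorem withPendants_adj {v w : V} : (M.withPendants f hf).Adj v w ↔
    M.Adj v w ∨ (v ∉ M.verts ∧ f v = w) ∨ (w ∉ M.verts ∧ f w = v) :=
  Iff.rfl

theorem withPendants_adj_of_notMem (hf_mem : ∀ u ∉ M.verts, f u ∈ M.verts) (hu : u ∉ M.verts) :
    (M.withPendants f hf).Adj u z ↔ f u = z := by
  have : ¬M.Adj u z := fun h => hu (M.edge_vert h)
  grind [withPendants_adj]

theorem withPendants_adj_of_adj (hM : M.IsMatching) (haa' : M.Adj a a') :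
    (M.withPendants f hf).Adj a z ↔ z = a' ∨ (z ∉ M.verts ∧ f z = a) := by
  have ha := M.edge_vert haa'
  have : M.Adj a z ↔ z = a' := ⟨fun h => (hM.eq_of_adj_left haa' h).symm, (· ▸ haa')⟩
  grind [withPendants_adj]

theorem IsMatching.exists_inducesPath_withPendants (hM : M.IsMatching)
    (hf_mem : ∀ u ∉ M.verts, f u ∈ M.verts) (hf_inj : M.vertsᶜ.InjOn f) (haa' : M.Adj a a') :
    ∃ l : List V, a ∈ l ∧ 2 ≤ l.length ∧ (M.withPendants f hf).spanningCoe.InducesPath l ∧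
      ∀ x ∈ l, ∀ y, (M.withPendants f hf).Adj x y → y ∈ l := by
  set F := M.withPendants f hf
  -- `f` is injective outside `M`, so each vertex carries at most one pendant vertex
  have pendant (b : V) : ∃ o : Option V, ∀ y, (y ∉ M.verts ∧ f y = b) ↔ y ∈ o := by
    by_cases hb : ∃ p, p ∉ M.verts ∧ f p = b
    · obtain ⟨p, hp, rfl⟩ := hb
      exact ⟨some p, fun y => ⟨fun hy => congrArg some (hf_inj hy.1 hp hy.2).symm,
        by rintro ⟨⟩; exact ⟨hp, rfl⟩⟩⟩
    · exact ⟨none, fun y => by simpa using fun hy => hb ⟨y, hy⟩⟩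
  obtain ⟨o, ho⟩ := pendant a
  obtain ⟨o', ho'⟩ := pendant a'
  have ha := M.edge_vert haa'
  have ha' := M.edge_vert haa'.symm
  have hne : a ≠ a' := haa'.ne
  have hadj_a (z : V) : F.Adj a z ↔ z = a' ∨ z ∈ o := by rw [withPendants_adj_of_adj hM haa', ho]
  have hadj_a' (z : V) : F.Adj a' z ↔ z = a ∨ z ∈ o' := by
    rw [withPendants_adj_of_adj hM haa'.symm, ho']
  have hadj_o (p : V) (hp : p ∈ o) (z : V) : F.Adj p z ↔ z = a := by
    rw [withPendants_adj_of_notMem hf_mem ((ho p).2 hp).1, ((ho p).2 hp).2, eq_comm]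
  have hadj_o' (p : V) (hp : p ∈ o') (z : V) : F.Adj p z ↔ z = a' := by
    rw [withPendants_adj_of_notMem hf_mem ((ho' p).2 hp).1, ((ho' p).2 hp).2, eq_comm]
  have hoM (p : V) (hp : p ∈ o) : p ∉ M.verts := ((ho p).2 hp).1
  have ho'M (p : V) (hp : p ∈ o') : p ∉ M.verts := ((ho' p).2 hp).1
  have hoo' (p : V) (hp : p ∈ o) (p' : V) (hp' : p' ∈ o') : p ≠ p' := by
    rintro rfl
    exact hne (((ho p).2 hp).2.symm.trans ((ho' p).2 hp').2)
  refine ⟨o.toList ++ a :: a' :: o'.toList, by simp, by simp; omega, ⟨?nodup, fun i j => ?adj⟩,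
    fun x hx y hxy => ?closed⟩
  case nodup =>
    rcases o with _ | p <;> rcases o' with _ | p' <;> simp at hoM ho'M hoo' ⊢ <;> grind
  case adj =>
    rcases o with _ | p <;> rcases o' with _ | p' <;>
      simp at hadj_a hadj_a' hadj_o hadj_o' hoM ho'M hoo' <;>
      fin_cases i <;> fin_cases j <;> simp [hadj_a, hadj_a', hadj_o, hadj_o'] <;> grind
  case closed =>
    rcases o with _ | p <;> rcases o' with _ | p' <;>
      simp at hx hadj_a hadj_a' hadj_o hadj_o' ⊢ <;> grind

theorem IsMatching.isPathFactor_withPendants (hM : M.IsMatching)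
    (hf_mem : ∀ u ∉ M.verts, f u ∈ M.verts) (hf_inj : M.vertsᶜ.InjOn f) :
    (M.withPendants f hf).IsPathFactor := by
  refine isPathFactor_of_forall_exists_inducesPath _ (fun _ => Set.mem_univ _) fun v => ?_
  by_cases hv : v ∈ M.verts
  · obtain ⟨a', hva', -⟩ := hM hv
    exact hM.exists_inducesPath_withPendants hf_mem hf_inj hva'
  · obtain ⟨a', ha', -⟩ := hM (hf_mem v hv)
    obtain ⟨l, hl, hlen, hpath, hclosed⟩ := hM.exists_inducesPath_withPendants hf_mem hf_inj ha'
    exact ⟨l, hclosed _ hl v (.inr (.inr ⟨hv, rfl⟩)), hlen, hpath, hclosed⟩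

end Subgraph

end SimpleGraph

theorem stmt2 {V : Type*} [Fintype V] (G : SimpleGraph V) [DecidableRel G.Adj]
    (h : Fintype.card V ≤ 3 * G.minDegree) :
    G.HasPathFactor := by
  obtain ⟨M, hM⟩ := exists_maximalFor_of_wellFoundedGT (Subgraph.IsMatching (G := G))
    Subgraph.verts ⟨⊥, Subgraph.isMatching_bot⟩
  obtain ⟨f, hf_adj, hf_inj⟩ :=
    G.exists_injOn_adj_of_ncard_le_minDegree _ (Subgraph.ncard_compl_verts_le_minDegree hM h)
  have hf_mem (u : V) (hu : u ∉ M.verts) : f u ∈ M.verts :=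
    by_contra fun hfu => Subgraph.not_adj_of_notMem_verts hM hu hfu (hf_adj u hu)
  exact ⟨_, hM.1.isPathFactor_withPendants (hf := hf_adj) hf_mem hf_inj⟩
end

section
/- Let G1 be a connected graph and T a tree. If the maximum degree Δ(T) > |V(G1)|, then the Cartesian product G1 □ T is not 1-tough. -/
/-! Delete the fibre `V(G₁) × {t}` over a vertex `t` of maximum degree of `T`. What remains is
`G₁ □ (T - t)`, whose components correspond to those of `T - t` because `G₁` is connected; and
in a tree the `Δ(T)` neighbours of `t` lie in distinct components of `T - t`, as every edge is
a bridge. So removing `|V(G₁)|` vertices leaves `Δ(T) > |V(G₁)| ≥ 1` components. -/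

open SimpleGraph

namespace SimpleGraph

variable {α β V : Type*}

def boxProdConnectedComponentEquiv (G : SimpleGraph α) (H : SimpleGraph β) :
    (G □ H).ConnectedComponent ≃ G.ConnectedComponent × H.ConnectedComponent :=
  (Quot.congrRight fun _ _ => reachable_boxProd).trans
    (Setoid.prodQuotientEquiv G.reachableSetoid H.reachableSetoid).symm

def boxProdInduceSndPreimageIso (G : SimpleGraph α) (H : SimpleGraph β) (s : Set β) :
    (G □ H).induce (Prod.snd ⁻¹' s) ≃g G □ H.induce s where
  toFun x := (x.1.1, ⟨x.1.2, x.2⟩)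
  invFun x := ⟨(x.1, x.2.1), x.2.2⟩
  left_inv _ := rfl
  right_inv _ := rfl
  map_rel_iff' := by simp [boxProd_adj, Subtype.ext_iff]

theorem Connected.card_connectedComponent {G : SimpleGraph V} (hG : G.Connected) :
    Nat.card G.ConnectedComponent = 1 :=
  Nat.card_eq_one_iff_unique.mpr
    ⟨hG.preconnected.subsingleton_connectedComponent, hG.nonempty.map G.connectedComponentMk⟩

theorem IsAcyclic.not_reachable_induce_compl_of_adj {G : SimpleGraph V} (hG : G.IsAcyclic)
    {v w w' : V} (hw : G.Adj v w) (hw' : G.Adj v w') (hne : w ≠ w') :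
    ¬ (G.induce {v}ᶜ).Reachable ⟨w, hw.ne'⟩ ⟨w', hw'.ne'⟩ := by
  intro hreach
  let φ : G.induce {v}ᶜ →g G.deleteEdges {s(v, w)} :=
    ⟨fun u => u.1, fun {u u'} huu' => by
      have hu : u.1 ≠ v := u.2
      have hu' : u'.1 ≠ v := u'.2
      simpa [deleteEdges_adj, hu, hu'] using huu'⟩
  have hw'v : (G.deleteEdges {s(v, w)}).Adj w' v := by
    simp [deleteEdges_adj, hw'.symm, hw'.ne', hne.symm]
  exact isAcyclic_iff_forall_adj_isBridge.mp hG hw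
    ((hreach.map φ).trans hw'v.reachable).symm

theorem IsAcyclic.degree_le_card_connectedComponent_induce_compl [Fintype V]
    {G : SimpleGraph V} [DecidableRel G.Adj] (hG : G.IsAcyclic) (v : V) :
    G.degree v ≤ Nat.card (G.induce {v}ᶜ).ConnectedComponent := by
  let f : G.neighborSet v → (G.induce {v}ᶜ).ConnectedComponent :=
    fun w => (G.induce {v}ᶜ).connectedComponentMk ⟨w, w.2.ne'⟩
  have hf : f.Injective := fun w w' hww' => by
    by_contra hne
    exact hG.not_reachable_induce_compl_of_adj w.2 w'.2 (Subtype.coe_ne_coe.mpr hne)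
      (ConnectedComponent.eq.mp hww')
  have := Nat.card_le_card_of_injective f hf
  rwa [Nat.card_eq_fintype_card (α := G.neighborSet v), card_neighborSet_eq_degree] at this

theorem Connected.numComponentsOutside_boxProd_univ_prod_singleton {G : SimpleGraph α}
    {H : SimpleGraph β} [Fintype α] [DecidableEq β] (hG : G.Connected) (t : β) :
    (G □ H).numComponentsOutside ↑(Finset.univ ×ˢ {t} : Finset (α × β)) =
      Nat.card (H.induce {t}ᶜ).ConnectedComponent := by
  have hcompl :
      (↑(Finset.univ ×ˢ {t} : Finset (α × β)) : Set (α × β))ᶜ = Prod.snd ⁻¹' {t}ᶜ := by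
    ext ⟨a, b⟩; simp [eq_comm]
  rw [numComponentsOutside, hcompl,
    Nat.card_congr ((boxProdInduceSndPreimageIso G H _).connectedComponentEquiv.trans
      (boxProdConnectedComponentEquiv G _)),
    Nat.card_prod, hG.card_connectedComponent, one_mul]

end SimpleGraph

theorem stmt6 {V₁ V₂ : Type*} [Fintype V₁] [Fintype V₂]
    (G₁ : SimpleGraph V₁) (T : SimpleGraph V₂) [DecidableRel T.Adj]
    (hG₁ : G₁.Connected) (hT : T.IsTree)
    (h : Fintype.card V₁ < T.maxDegree) :
    ¬ (G₁ □ T).IsOneTough := by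
  classical
  have := hT.connected.nonempty
  obtain ⟨t, ht⟩ := T.exists_maximal_degree_vertex
  have hcomp := hG₁.numComponentsOutside_boxProd_univ_prod_singleton (H := T) t
  have hdeg := hT.isAcyclic.degree_le_card_connectedComponent_induce_compl t
  have hcard : (Finset.univ ×ˢ {t} : Finset (V₁ × V₂)).card = Fintype.card V₁ := by simp
  have hpos : 0 < Fintype.card V₁ := Fintype.card_pos_iff.mpr hG₁.nonempty
  intro hTough
  have := hTough (Finset.univ ×ˢ {t}) (by omega)
  omega
end

section
/- Let T be the tree with vertex set {1,...,8} and edges {12,23,34,45,26,37,48}. Then the Cartesian product P_4 □ T is not Hamiltonian. -/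
open SimpleGraph

/-- The tree on vertices `{1,…,8}` (relabelled as `Fin 8`, vertex `i` standing for `i+1`)
with edges `12, 23, 34, 45, 26, 37, 48`. -/
def T₁ : SimpleGraph (Fin 8) :=
  SimpleGraph.fromEdgeSet {s(0, 1), s(1, 2), s(2, 3), s(3, 4), s(1, 5), s(2, 6), s(3, 7)}

/-!
Write the vertices as `(r, t)`, with `r : Fin 4` on the path and `t : Fin 8` in the tree.
A Hamiltonian cycle gives every vertex exactly two cycle neighbours, so both edges at a vertex of
degree two are used. At the corners `(0, ℓ)`, `(3, ℓ)` over the leaves `ℓ` this fills up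
`(0,1)`, `(3,1)`, `(0,3)`, `(3,3)` with leaf edges, and then forces the edge `(0,2)`–`(1,2)`.
A cycle crosses every cut at least twice; the only edges leaving the columns `{0,1,5}` are the
`(r,1)`–`(r,2)`, and the two outer ones are already excluded, so `(1,1)`–`(1,2)` is used, and
likewise `(1,3)`–`(1,2)`. Then `(1,2)` has three cycle neighbours.
-/

namespace SimpleGraph.Walk

variable {V : Type*} {G : SimpleGraph V} {u : V}

lemma toSubgraph_adj_of_mem_darts {v : V} {p : G.Walk u v} {d : G.Dart} (hd : d ∈ p.darts) :
    p.toSubgraph.Adj d.fst d.snd :=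
  adj_toSubgraph_iff_mem_edges.mpr (List.mem_map_of_mem hd)

lemma IsTrail.symm_notMem_darts {v : V} {p : G.Walk u v} (hp : p.IsTrail) {d : G.Dart}
    (hd : d ∈ p.darts) : d.symm ∉ p.darts := fun hd' =>
  d.symm_ne (List.inj_on_of_nodup_map hp.edges_nodup hd' hd d.edge_symm)

lemma exists_boundary_darts (p : G.Walk u u) {S : Set V} {x y : V} (hx : x ∈ p.support)
    (hy : y ∈ p.support) (hxS : x ∈ S) (hyS : y ∉ S) :
    ∃ d₁ ∈ p.darts, ∃ d₂ ∈ p.darts, d₁.fst ∈ S ∧ d₁.snd ∉ S ∧ d₂.fst ∉ S ∧ d₂.snd ∈ S := by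
  classical
  let q := p.rotate x hx
  have hyq : y ∈ q.support := (p.mem_support_rotate_iff x hx).mpr hy
  have hq {d : G.Dart} (hd : d ∈ q.darts) : d ∈ p.darts := (p.rotate_darts x hx).mem_iff.mp hd
  obtain ⟨d₁, hd₁, h₁⟩ := (q.takeUntil y hyq).exists_boundary_dart S hxS hyS
  obtain ⟨d₂, hd₂, h₂⟩ := (q.dropUntil y hyq).exists_boundary_dart Sᶜ hyS (by simpa using hxS)
  exact ⟨d₁, hq (q.darts_takeUntil_subset_darts hyq hd₁), d₂,
    hq (q.darts_dropUntil_subset_darts hyq hd₂), h₁.1, h₁.2, h₂.1, by simpa using h₂.2⟩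

/-- A cycle meeting both `S` and `Sᶜ` leaves `S` and re-enters it through two different edges. -/
lemma IsCycle.toSubgraph_adj_of_boundary {p : G.Walk u u} (hp : p.IsCycle) {S : Set V}
    {x y x₁ y₁ x₂ y₂ : V} (hx : x ∈ p.support) (hy : y ∈ p.support) (hxS : x ∈ S) (hyS : y ∉ S)
    (h : ∀ a b, a ∈ S → b ∉ S → p.toSubgraph.Adj a b → a = x₁ ∧ b = y₁ ∨ a = x₂ ∧ b = y₂) :
    p.toSubgraph.Adj x₁ y₁ ∧ p.toSubgraph.Adj x₂ y₂ := by
  obtain ⟨d₁, hd₁, d₂, hd₂, h₁S, h₁S', h₂S', h₂S⟩ := p.exists_boundary_darts hx hy hxS hyS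
  have hsymm (h₁ : d₁.fst = d₂.snd) (h₂ : d₁.snd = d₂.fst) : False :=
    hp.isTrail.symm_notMem_darts hd₁ (by
      convert hd₂ using 1; ext <;> simp [h₁, h₂])
  have hadj₁ := toSubgraph_adj_of_mem_darts hd₁
  have hadj₂ := (toSubgraph_adj_of_mem_darts hd₂).symm
  rcases h _ _ h₁S h₁S' hadj₁ with ⟨e₁, f₁⟩ | ⟨e₁, f₁⟩ <;>
    rcases h _ _ h₂S h₂S' hadj₂ with ⟨e₂, f₂⟩ | ⟨e₂, f₂⟩
  · exact (hsymm (e₁.trans e₂.symm) (f₁.trans f₂.symm)).elim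
  · exact ⟨e₁ ▸ f₁ ▸ hadj₁, e₂ ▸ f₂ ▸ hadj₂⟩
  · exact ⟨e₂ ▸ f₂ ▸ hadj₂, e₁ ▸ f₁ ▸ hadj₁⟩
  · exact (hsymm (e₁.trans e₂.symm) (f₁.trans f₂.symm)).elim

lemma IsCycle.neighborSet_toSubgraph_eq_of_subset {p : G.Walk u u} (hp : p.IsCycle) {v a b : V}
    (hv : v ∈ p.support) (h : p.toSubgraph.neighborSet v ⊆ {a, b}) :
    p.toSubgraph.neighborSet v = {a, b} := by
  refine Set.eq_of_subset_of_ncard_le h ?_ (Set.toFinite _)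
  rw [hp.ncard_neighborSet_toSubgraph_eq_two hv]
  exact (Set.ncard_insert_le a {b}).trans (by simp)

lemma IsCycle.neighborSet_toSubgraph_eq_of_adj {p : G.Walk u u} (hp : p.IsCycle) {v a b : V}
    (ha : p.toSubgraph.Adj v a) (hb : p.toSubgraph.Adj v b) (hab : a ≠ b) :
    p.toSubgraph.neighborSet v = {a, b} := by
  have h2 := hp.ncard_neighborSet_toSubgraph_eq_two (p.mem_support_of_adj_toSubgraph ha)
  have hsub : {a, b} ⊆ p.toSubgraph.neighborSet v := Set.pair_subset ha hb
  refine (Set.eq_of_subset_of_ncard_le hsub ?_ (Set.finite_of_ncard_ne_zero (by omega))).symm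
  rw [h2, Set.ncard_pair hab]

lemma IsCycle.toSubgraph_adj_of_forall_adj {p : G.Walk u u} (hp : p.IsCycle)
    {a a' v : V} (ha : a ∈ p.support) (h : ∀ w, G.Adj a w → w = a' ∨ w = v) :
    p.toSubgraph.Adj a v := by
  have := hp.neighborSet_toSubgraph_eq_of_subset ha fun w hw => h w hw.adj_sub
  show v ∈ p.toSubgraph.neighborSet a
  rw [this]
  exact Set.mem_insert_of_mem a' rfl

lemma IsCycle.neighborSet_toSubgraph_eq_of_forall_adj {p : G.Walk u u} (hp : p.IsCycle)
    {v a a' b b' : V} (ha : a ∈ p.support) (hb : b ∈ p.support) (hab : a ≠ b)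
    (ha' : ∀ w, G.Adj a w → w = a' ∨ w = v) (hb' : ∀ w, G.Adj b w → w = b' ∨ w = v) :
    p.toSubgraph.neighborSet v = {a, b} :=
  hp.neighborSet_toSubgraph_eq_of_adj (hp.toSubgraph_adj_of_forall_adj ha ha').symm
    (hp.toSubgraph_adj_of_forall_adj hb hb').symm hab

end SimpleGraph.Walk

instance : DecidableRel T₁.Adj := fun _ _ => decidable_of_iff' _ (fromEdgeSet_adj _)
instance : DecidableRel (pathGraph 4).Adj := fun _ _ => decidable_of_iff' _ pathGraph_adj
instance : DecidableRel (pathGraph 4 □ T₁).Adj := fun _ _ => decidable_of_iff' _ boxProd_adj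

namespace T₁

variable {u : Fin 4 × Fin 8} {p : (pathGraph 4 □ T₁).Walk u u}

lemma toSubgraph_adj_one_two_of_boundary (hp : p.IsHamiltonianCycle) {t : Fin 8}
    (S : Finset (Fin 8)) (ht : t ∈ S) (h2 : 2 ∉ S)
    (hS : ∀ x y : Fin 4 × Fin 8, (pathGraph 4 □ T₁).Adj x y → x.2 ∈ S → y.2 ∉ S →
      x.1 = y.1 ∧ x.2 = t ∧ y.2 = 2)
    (h₀ : (0, 2) ∉ p.toSubgraph.neighborSet (0, t))
    (h₃ : (3, 2) ∉ p.toSubgraph.neighborSet (3, t)) :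
    p.toSubgraph.Adj (1, t) (1, 2) := by
  refine (hp.isCycle.toSubgraph_adj_of_boundary (S := {v | v.2 ∈ S}) (x₂ := (2, t))
    (y₂ := (2, 2)) (hp.mem_support (0, t)) (hp.mem_support (0, 2)) ht h2 ?_).1
  rintro ⟨r, a⟩ ⟨r', b⟩ ha hb hab
  obtain ⟨rfl, rfl, rfl⟩ := hS _ _ hab.adj_sub ha hb
  fin_cases r
  · exact (h₀ hab).elim
  · exact .inl ⟨rfl, rfl⟩
  · exact .inr ⟨rfl, rfl⟩
  · exact (h₃ hab).elim

lemma toSubgraph_adj_zero_two (hp : p.IsHamiltonianCycle)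
    (h₁ : (0, 2) ∉ p.toSubgraph.neighborSet (0, 1))
    (h₃ : (0, 2) ∉ p.toSubgraph.neighborSet (0, 3)) :
    p.toSubgraph.Adj (0, 2) (1, 2) := by
  have hsub : p.toSubgraph.neighborSet (0, 2) ⊆ {(0, 6), (1, 2)} := by
    intro w hw
    have hG : ∀ w, (pathGraph 4 □ T₁).Adj (0, 2) w →
        w = (0, 1) ∨ w = (0, 3) ∨ w = (0, 6) ∨ w = (1, 2) := by decide
    rcases hG w hw.adj_sub with rfl | rfl | rfl | rfl
    · exact (h₁ hw.symm).elim
    · exact (h₃ hw.symm).elim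
    · exact .inl rfl
    · exact .inr rfl
  have h02 := hp.isCycle.neighborSet_toSubgraph_eq_of_subset (hp.mem_support (0, 2)) hsub
  show (1, 2) ∈ p.toSubgraph.neighborSet (0, 2)
  rw [h02]
  exact Set.mem_insert_of_mem _ rfl

end T₁

theorem stmt18 : ¬ (pathGraph 4 □ T₁).IsHamiltonian := by
  intro h
  obtain ⟨u, p, hp⟩ := h (by simp)
  have hsupp := hp.mem_support
  have h01 : p.toSubgraph.neighborSet (0, 1) = {(0, 0), (0, 5)} :=
    hp.isCycle.neighborSet_toSubgraph_eq_of_forall_adj (a' := (1, 0)) (b' := (1, 5))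
      (hsupp _) (hsupp _) (by decide) (by decide) (by decide)
  have h31 : p.toSubgraph.neighborSet (3, 1) = {(3, 0), (3, 5)} :=
    hp.isCycle.neighborSet_toSubgraph_eq_of_forall_adj (a' := (2, 0)) (b' := (2, 5))
      (hsupp _) (hsupp _) (by decide) (by decide) (by decide)
  have h03 : p.toSubgraph.neighborSet (0, 3) = {(0, 4), (0, 7)} :=
    hp.isCycle.neighborSet_toSubgraph_eq_of_forall_adj (a' := (1, 4)) (b' := (1, 7))
      (hsupp _) (hsupp _) (by decide) (by decide) (by decide)
  have h33 : p.toSubgraph.neighborSet (3, 3) = {(3, 4), (3, 7)} :=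
    hp.isCycle.neighborSet_toSubgraph_eq_of_forall_adj (a' := (2, 4)) (b' := (2, 7))
      (hsupp _) (hsupp _) (by decide) (by decide) (by decide)
  have hdown := T₁.toSubgraph_adj_zero_two hp (h01 ▸ by decide) (h03 ▸ by decide)
  have hleft := T₁.toSubgraph_adj_one_two_of_boundary hp (t := 1) {0, 1, 5} (by decide)
    (by decide) (by decide) (h01 ▸ by decide) (h31 ▸ by decide)
  have hright := T₁.toSubgraph_adj_one_two_of_boundary hp (t := 3) {3, 4, 7} (by decide)
    (by decide) (by decide) (h03 ▸ by decide) (h33 ▸ by decide)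
  have h12 := hp.isCycle.neighborSet_toSubgraph_eq_of_adj hleft.symm hright.symm (by decide)
  have h02 : ((0, 2) : Fin 4 × Fin 8) ∈ p.toSubgraph.neighborSet (1, 2) := hdown.symm
  rw [h12] at h02
  simp at h02
end

section
/- Let T be the tree with vertex set {1,...,8} and edges {12,23,34,45,26,37,48}. Then the Cartesian product P_4 □ T is 1-tough: for every vertex subset S such that (P_4 □ T) − S is disconnected, the number of components of (P_4 □ T) − S is at most |S|. -/
open SimpleGraph

section Aux

set_option linter.unusedSectionVars false

variable {V : Type*} [Fintype V] [DecidableEq V]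

lemma per_aux {σ : V → V} (hinj : Function.Injective σ) (v : V) : ∃ p, σ^[p+1] v = v := by
  obtain ⟨i, j, hne, hij⟩ := Finite.exists_ne_map_eq_of_infinite (fun n : ℕ => σ^[n] v)
  rcases hne.lt_or_gt with hlt | hlt
  · refine ⟨j - i - 1, ?_⟩
    have h1 : σ^[i] (σ^[j-i] v) = σ^[i] v := by
      rw [← Function.iterate_add_apply]
      have : i + (j - i) = j := by omega
      rw [this]; exact hij.symm
    have h2 := hinj.iterate i h1
    rwa [show j - i - 1 + 1 = j - i by omega]
  · refine ⟨i - j - 1, ?_⟩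
    have h1 : σ^[j] (σ^[i-j] v) = σ^[j] v := by
      rw [← Function.iterate_add_apply]
      have : j + (i - j) = i := by omega
      rw [this]; exact hij
    have h2 := hinj.iterate j h1
    rwa [show i - j - 1 + 1 = i - j by omega]

lemma orbsym {σ : V → V} (hinj : Function.Injective σ) {u w : V} (h : ∃ n, σ^[n] u = w) :
    ∃ n, σ^[n] w = u := by
  obtain ⟨k, hk⟩ := h
  obtain ⟨p, hp⟩ := per_aux hinj u
  have hfix : σ^[(p+1)*(k+1)] u = u := by
    rw [Function.iterate_mul]
    exact Function.iterate_fixed hp (k+1)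
  have hge : k ≤ (p+1)*(k+1) := by nlinarith
  refine ⟨(p+1)*(k+1) - k, ?_⟩
  rw [← hk, ← Function.iterate_add_apply, show (p+1)*(k+1) - k + k = (p+1)*(k+1) by omega]
  exact hfix

lemma chainReach (G : SimpleGraph V) {σ : V → V} (hadj : ∀ v, G.Adj v (σ v)) (S : Finset V)
    (w : V) (m : ℕ) (h : ∀ j ≤ m, σ^[j] w ∉ S) :
    (G.induce ((↑S : Set V)ᶜ)).Reachable
      ⟨w, by simpa using h 0 (Nat.zero_le m)⟩
      ⟨σ^[m] w, by simpa using h m le_rfl⟩ := by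
  induction m with
  | zero => exact Reachable.refl _
  | succ n ih =>
    refine (ih (fun j hj => h j (by omega))).trans (SimpleGraph.Adj.reachable ?_)
    show G.Adj (σ^[n] w) (σ^[n+1] w)
    rw [Function.iterate_succ_apply']
    exact hadj _

/-- Within an orbit that completely misses `S`, everything lies in one component. -/
lemma orbReach (G : SimpleGraph V) {σ : V → V} (hinj : Function.Injective σ)
    (hadj : ∀ v, G.Adj v (σ v)) (S : Finset V) (v0 : V)
    (hOrb : ∀ w : V, (∃ n, σ^[n] v0 = w) → w ∉ S)
    (t w : V) (ht : ∃ n, σ^[n] v0 = t) (hw : ∃ n, σ^[n] v0 = w) :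
    (G.induce ((↑S : Set V)ᶜ)).connectedComponentMk ⟨w, by simpa using hOrb w hw⟩ =
      (G.induce ((↑S : Set V)ᶜ)).connectedComponentMk ⟨t, by simpa using hOrb t ht⟩ := by
  obtain ⟨k, hk⟩ := hw
  obtain ⟨m, hm⟩ := orbsym hinj ⟨k, hk⟩
  obtain ⟨nt, hnt⟩ := ht
  have hall : ∀ j ≤ m + nt, σ^[j] w ∉ S := by
    intro j _
    exact hOrb _ ⟨j + k, by rw [Function.iterate_add_apply, hk]⟩
  have hr := chainReach G hadj S w (m + nt) hall
  have hend : σ^[m + nt] w = t := by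
    rw [show m + nt = nt + m by omega, Function.iterate_add_apply, hm, hnt]
  exact SimpleGraph.ConnectedComponent.sound (hend ▸ hr)

end Aux

section Key

set_option linter.unusedSectionVars false

variable {V : Type*} [Fintype V] [DecidableEq V]

/-- Key lemma: if `V` is covered by (at most) two `σ`-cycles through `u0` and `v0`, with a
consecutive pair `a1, σ a1` on the first cycle each adjacent to a vertex of the second cycle,
then any cut set meeting the first cycle satisfies the toughness inequality. -/
lemma key (G : SimpleGraph V) (σ : V → V) (hinj : Function.Injective σ)
    (hadj : ∀ v, G.Adj v (σ v)) (u0 v0 a1 x y : V)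
    (horb : ∀ w : V, (∃ n, σ^[n] u0 = w) ∨ (∃ n, σ^[n] v0 = w))
    (ha : ∃ n, σ^[n] u0 = a1) (hx : ∃ n, σ^[n] v0 = x) (hy : ∃ n, σ^[n] v0 = y)
    (e1 : G.Adj a1 x) (e2 : G.Adj (σ a1) y)
    (S : Finset V) (hu : ∃ n, σ^[n+1] u0 ∈ S) :
    G.numComponentsOutside ↑S ≤ S.card := by
  classical
  set H := G.induce ((↑S : Set V)ᶜ) with hH
  have hmemc : ∀ w : V, w ∉ S → w ∈ ((↑S : Set V)ᶜ) := fun w hw => by simpa using hw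
  have orbP : ∀ u w : V, (∃ n, σ^[n+1] u ∈ S) → (∃ n, σ^[n] u = w) →
      ∃ n, σ^[n+1] w ∈ S := by
    rintro u w ⟨n, hn⟩ huw
    obtain ⟨m, hm⟩ := orbsym hinj huw
    refine ⟨m + n, ?_⟩
    rw [show m + n + 1 = (n+1) + m by omega, Function.iterate_add_apply, hm]
    exact hn
  have notS : ∀ (w : V) (hP : ∃ n, σ^[n+1] w ∈ S), w ∉ S →
      ∀ j ≤ Nat.find hP, σ^[j] w ∉ S := by
    intro w hP hw j hj
    match j, hj with
    | 0, _ => simpa using hw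
    | (j+1), hj => exact Nat.find_min hP (by omega)
  have inj2 : ∀ (w1 : V) (hP1 : ∃ n, σ^[n+1] w1 ∈ S) (h1 : w1 ∉ S)
      (w2 : V) (hP2 : ∃ n, σ^[n+1] w2 ∈ S) (h2 : w2 ∉ S),
      σ^[Nat.find hP1 + 1] w1 = σ^[Nat.find hP2 + 1] w2 →
      H.connectedComponentMk ⟨w1, hmemc _ h1⟩ = H.connectedComponentMk ⟨w2, hmemc _ h2⟩ := by
    intro w1 hP1 h1 w2 hP2 h2 heq
    have hmid : σ^[Nat.find hP1] w1 = σ^[Nat.find hP2] w2 := by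
      apply hinj
      rw [Function.iterate_succ_apply', Function.iterate_succ_apply'] at heq
      exact heq
    have r1 := chainReach G hadj S w1 (Nat.find hP1) (notS w1 hP1 h1)
    have r2 := chainReach G hadj S w2 (Nat.find hP2) (notS w2 hP2 h2)
    calc H.connectedComponentMk ⟨w1, hmemc _ h1⟩
        = H.connectedComponentMk ⟨σ^[Nat.find hP1] w1,
            by simpa using notS w1 hP1 h1 _ le_rfl⟩ := SimpleGraph.ConnectedComponent.sound r1
      _ = H.connectedComponentMk ⟨σ^[Nat.find hP2] w2,
            by simpa using notS w2 hP2 h2 _ le_rfl⟩ := congrArg _ (Subtype.ext hmid)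
      _ = H.connectedComponentMk ⟨w2, hmemc _ h2⟩ :=
          (SimpleGraph.ConnectedComponent.sound r2).symm
  show Nat.card H.ConnectedComponent ≤ S.card
  have houtS : ∀ c : H.ConnectedComponent, ((Quot.out c : ((↑S : Set V)ᶜ : Set V)) : V) ∉ S :=
    fun c hmem => (Quot.out c).2 (Finset.mem_coe.mpr hmem)
  have houtmk : ∀ c : H.ConnectedComponent,
      H.connectedComponentMk ⟨((Quot.out c : ((↑S : Set V)ᶜ : Set V)) : V), hmemc _ (houtS c)⟩ = c :=
    fun c => Quot.out_eq c
  have final : ∀ F : H.ConnectedComponent → {s // s ∈ S}, Function.Injective F →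
      Nat.card H.ConnectedComponent ≤ S.card := by
    intro F hF
    calc Nat.card H.ConnectedComponent ≤ Nat.card {s // s ∈ S} :=
          Nat.card_le_card_of_injective F hF
      _ = S.card := Nat.card_eq_finsetCard S
  by_cases hv : ∃ n, σ^[n+1] v0 ∈ S
  · -- both orbits meet S : every vertex's forward orbit hits S
    have hPall : ∀ w : V, ∃ n, σ^[n+1] w ∈ S :=
      fun w => (horb w).elim (orbP u0 w hu) (orbP v0 w hv)
    refine final (fun c =>
      ⟨σ^[Nat.find (hPall ((Quot.out c : ((↑S : Set V)ᶜ : Set V)) : V)) + 1]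
        ((Quot.out c : ((↑S : Set V)ᶜ : Set V)) : V), Nat.find_spec (hPall _)⟩) ?_
    intro c1 c2 hc
    have h' := congrArg Subtype.val hc
    have := inj2 _ (hPall _) (houtS c1) _ (hPall _) (houtS c2) h'
    rwa [houtmk, houtmk] at this
  · push_neg at hv
    have hOrb2 : ∀ w : V, (∃ n, σ^[n] v0 = w) → w ∉ S := by
      rintro w ⟨k, hk⟩
      match k, hk with
      | 0, hk =>
        obtain ⟨p, hp⟩ := per_aux hinj v0
        simp only [Function.iterate_zero_apply] at hk
        subst hk
        intro hmem
        exact hv p (by rwa [hp])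
      | (k+1), hk =>
        intro hmem
        exact hv k (by rwa [hk])
    have hnotP : ∀ w : V, ¬(∃ n, σ^[n+1] w ∈ S) → ∃ n, σ^[n] v0 = w :=
      fun w hw => (horb w).resolve_left (fun h => hw (orbP u0 w hu h))
    have hPrep : ∀ (t : V) (ht : ∃ n, σ^[n] v0 = t) (c : H.ConnectedComponent),
        c ≠ H.connectedComponentMk ⟨t, hmemc t (hOrb2 t ht)⟩ →
        ∃ n, σ^[n+1] ((Quot.out c : ((↑S : Set V)ᶜ : Set V)) : V) ∈ S := by
      intro t ht c hc
      by_contra hnp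
      refine hc ?_
      rw [← houtmk c]
      exact orbReach G hinj hadj S v0 hOrb2 t _ ht (hnotP _ hnp)
    have main : ∀ (a t : V), (∃ n, σ^[n+1] a ∈ S) → a ∉ S → (∃ n, σ^[n] v0 = t) →
        G.Adj a t → Nat.card H.ConnectedComponent ≤ S.card := by
      intro a t hPa haS ht hat
      have htS : t ∉ S := hOrb2 t ht
      refine final (fun c =>
        if h : c = H.connectedComponentMk ⟨t, hmemc t (hOrb2 t ht)⟩ then
          ⟨σ^[Nat.find hPa + 1] a, Nat.find_spec hPa⟩
        else ⟨σ^[Nat.find (hPrep t ht c h) + 1] ((Quot.out c : ((↑S : Set V)ᶜ : Set V)) : V),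
          Nat.find_spec (hPrep t ht c h)⟩) ?_
      have hmkat : H.connectedComponentMk ⟨a, hmemc a haS⟩ =
          H.connectedComponentMk ⟨t, hmemc t (hOrb2 t ht)⟩ := by
        refine SimpleGraph.ConnectedComponent.sound (SimpleGraph.Adj.reachable ?_)
        exact hat
      intro c1 c2 hc
      by_cases h1 : c1 = H.connectedComponentMk ⟨t, hmemc t (hOrb2 t ht)⟩ <;>
        by_cases h2 : c2 = H.connectedComponentMk ⟨t, hmemc t (hOrb2 t ht)⟩
      · rw [h1, h2]
      · simp only [dif_pos h1, dif_neg h2] at hc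
        have h' := congrArg Subtype.val hc
        have := inj2 a hPa haS _ (hPrep t ht c2 h2) (houtS c2) h'
        rw [houtmk] at this
        rw [h1, ← hmkat, this]
      · simp only [dif_neg h1, dif_pos h2] at hc
        have h' := congrArg Subtype.val hc
        have := inj2 _ (hPrep t ht c1 h1) (houtS c1) a hPa haS h'
        rw [houtmk] at this
        rw [h2, ← hmkat, ← this]
      · simp only [dif_neg h1, dif_neg h2] at hc
        have h' := congrArg Subtype.val hc
        have := inj2 _ (hPrep t ht c1 h1) (houtS c1) _ (hPrep t ht c2 h2) (houtS c2) h'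
        rwa [houtmk, houtmk] at this
    have hPa1 : ∃ n, σ^[n+1] a1 ∈ S := orbP u0 a1 hu ha
    by_cases ha1 : a1 ∈ S
    · by_cases ha2 : σ a1 ∈ S
      · -- a1 and σ a1 both removed: use σ a1 as the value of the orbit-v0 component
        refine final (fun c =>
          if h : c = H.connectedComponentMk ⟨x, hmemc x (hOrb2 x hx)⟩ then ⟨σ a1, ha2⟩
          else ⟨σ^[Nat.find (hPrep x hx c h) + 1] ((Quot.out c : ((↑S : Set V)ᶜ : Set V)) : V),
            Nat.find_spec (hPrep x hx c h)⟩) ?_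
        intro c1 c2 hc
        by_cases h1 : c1 = H.connectedComponentMk ⟨x, hmemc x (hOrb2 x hx)⟩ <;>
          by_cases h2 : c2 = H.connectedComponentMk ⟨x, hmemc x (hOrb2 x hx)⟩
        · rw [h1, h2]
        · simp only [dif_pos h1, dif_neg h2] at hc
          have h' : σ a1 = σ^[Nat.find (hPrep x hx c2 h2) + 1]
              ((Quot.out c2 : ((↑S : Set V)ᶜ : Set V)) : V) := congrArg Subtype.val hc
          rw [Function.iterate_succ_apply'] at h'
          have hmid := hinj h'
          exact absurd (hmid ▸ ha1) (notS _ (hPrep x hx c2 h2) (houtS c2) _ le_rfl)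
        · simp only [dif_neg h1, dif_pos h2] at hc
          have h' : σ a1 = σ^[Nat.find (hPrep x hx c1 h1) + 1]
              ((Quot.out c1 : ((↑S : Set V)ᶜ : Set V)) : V) := (congrArg Subtype.val hc).symm
          rw [Function.iterate_succ_apply'] at h'
          have hmid := hinj h'
          exact absurd (hmid ▸ ha1) (notS _ (hPrep x hx c1 h1) (houtS c1) _ le_rfl)
        · simp only [dif_neg h1, dif_neg h2] at hc
          have h' := congrArg Subtype.val hc
          have := inj2 _ (hPrep x hx c1 h1) (houtS c1) _ (hPrep x hx c2 h2) (houtS c2) h'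
          rwa [houtmk, houtmk] at this
      · obtain ⟨n0, hn0⟩ := ha
        exact main (σ a1) y (orbP u0 (σ a1) hu
          ⟨n0+1, by rw [Function.iterate_succ_apply', hn0]⟩) ha2 hy e2
    · exact main a1 x hPa1 ha1 hx e1

/-- If both orbits miss `S`, the graph minus `S` is connected. -/
lemma allconn (G : SimpleGraph V) (σ : V → V) (hinj : Function.Injective σ)
    (hadj : ∀ v, G.Adj v (σ v)) (u0 v0 a1 x : V)
    (horb : ∀ w : V, (∃ n, σ^[n] u0 = w) ∨ (∃ n, σ^[n] v0 = w))
    (ha : ∃ n, σ^[n] u0 = a1) (hx : ∃ n, σ^[n] v0 = x) (e1 : G.Adj a1 x)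
    (S : Finset V) (hu : ∀ n, σ^[n+1] u0 ∉ S) (hv : ∀ n, σ^[n+1] v0 ∉ S) :
    G.numComponentsOutside ↑S ≤ 1 := by
  classical
  set H := G.induce ((↑S : Set V)ᶜ) with hH
  have hmemc : ∀ w : V, w ∉ S → w ∈ ((↑S : Set V)ᶜ) := fun w hw => by simpa using hw
  have hOrb : ∀ (z : V) (hz : ∀ n, σ^[n+1] z ∉ S) (w : V), (∃ n, σ^[n] z = w) → w ∉ S := by
    rintro z hz w ⟨k, hk⟩
    match k, hk with
    | 0, hk =>
      obtain ⟨p, hp⟩ := per_aux hinj z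
      simp only [Function.iterate_zero_apply] at hk
      subst hk
      intro hmem
      exact hz p (by rwa [hp])
    | (k+1), hk =>
      intro hmem
      exact hz k (by rwa [hk])
  have ha1S : a1 ∉ S := hOrb u0 hu a1 ha
  have hxS : x ∉ S := hOrb v0 hv x hx
  have hmk : ∀ w : V, ∀ hw : w ∉ S, H.connectedComponentMk ⟨w, hmemc w hw⟩ =
      H.connectedComponentMk ⟨x, hmemc x hxS⟩ := by
    intro w hw
    rcases horb w with hw1 | hw2
    · have h1 : H.connectedComponentMk ⟨w, hmemc w hw⟩ =
          H.connectedComponentMk ⟨a1, hmemc a1 ha1S⟩ :=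
        orbReach G hinj hadj S u0 (hOrb u0 hu) a1 w ha hw1
      have h2 : H.connectedComponentMk ⟨a1, hmemc a1 ha1S⟩ =
          H.connectedComponentMk ⟨x, hmemc x hxS⟩ :=
        SimpleGraph.ConnectedComponent.sound (SimpleGraph.Adj.reachable e1)
      rw [h1, h2]
    · exact orbReach G hinj hadj S v0 (hOrb v0 hv) x w hx hw2
  show Nat.card H.ConnectedComponent ≤ 1
  have hsub : Subsingleton H.ConnectedComponent := by
    constructor
    intro c1 c2
    have h1 := hmk ((Quot.out c1 : ((↑S : Set V)ᶜ : Set V)) : V)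
      (fun hmem => (Quot.out c1).2 (Finset.mem_coe.mpr hmem))
    have h2 := hmk ((Quot.out c2 : ((↑S : Set V)ᶜ : Set V)) : V)
      (fun hmem => (Quot.out c2).2 (Finset.mem_coe.mpr hmem))
    rw [show H.connectedComponentMk (Quot.out c1) = c1 from Quot.out_eq c1] at h1
    rw [show H.connectedComponentMk (Quot.out c2) = c2 from Quot.out_eq c2] at h2
    rw [h1, h2]
  have : Nonempty H.ConnectedComponent := ⟨H.connectedComponentMk ⟨x, hmemc x hxS⟩⟩
  exact le_of_eq Nat.card_unique

end Key

/-- Successor function of a spanning pair of cycles in `P₄ □ T₁`: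
a 20-cycle through `(0,0)` and a 12-cycle through `(0,3)`. -/
def tbl : Fin 32 → Fin 4 × Fin 8 :=
  ![(0,1),(0,5),(1,2),(0,4),(1,4),(1,5),(0,2),(0,3),
    (0,0),(1,0),(1,1),(2,3),(1,3),(2,5),(0,6),(0,7),
    (2,1),(2,2),(3,2),(2,4),(3,4),(3,5),(1,6),(1,7),
    (2,0),(3,0),(3,6),(3,7),(3,3),(3,1),(2,6),(2,7)]

def sig : Fin 4 × Fin 8 → Fin 4 × Fin 8 := fun v =>
  tbl ⟨v.1.val * 8 + v.2.val, by have := v.1.isLt; have := v.2.isLt; omega⟩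

def Tb : Fin 8 → Fin 8 → Bool := fun c d =>
  (c,d) ∈ [((0:Fin 8),(1:Fin 8)),(1,0),(1,2),(2,1),(2,3),(3,2),(3,4),(4,3),
    (1,5),(5,1),(2,6),(6,2),(3,7),(7,3)]

lemma T1_adj (c d : Fin 8) : T₁.Adj c d ↔ Tb c d = true := by
  unfold T₁
  rw [SimpleGraph.fromEdgeSet_adj]
  simp only [Set.mem_insert_iff, Set.mem_singleton_iff]
  fin_cases c <;> fin_cases d <;> decide

def Db : Fin 4 × Fin 8 → Fin 4 × Fin 8 → Bool := fun a b =>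
  ((a.1.val + 1 = b.1.val ∨ b.1.val + 1 = a.1.val) ∧ a.2 = b.2) ∨ (Tb a.2 b.2 ∧ a.1 = b.1)

lemma G_adj (a b : Fin 4 × Fin 8) : (pathGraph 4 □ T₁).Adj a b ↔ Db a b = true := by
  rw [SimpleGraph.boxProd_adj, pathGraph_adj, T1_adj]
  simp [Db]

lemma sig_inj : Function.Injective sig := by decide

lemma sig_adj : ∀ v, (pathGraph 4 □ T₁).Adj v (sig v) := by
  have h : ∀ v, Db v (sig v) = true := by decide
  exact fun v => (G_adj v (sig v)).mpr (h v)

lemma sig_orb : ∀ w : Fin 4 × Fin 8,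
    (∃ n, sig^[n] ((0 : Fin 4), (0 : Fin 8)) = w) ∨
    (∃ n, sig^[n] ((0 : Fin 4), (3 : Fin 8)) = w) := by
  have h : ∀ w : Fin 4 × Fin 8,
      (∃ n : Fin 20, sig^[n.val] ((0 : Fin 4), (0 : Fin 8)) = w) ∨
      (∃ n : Fin 12, sig^[n.val] ((0 : Fin 4), (3 : Fin 8)) = w) := by decide
  intro w
  rcases h w with ⟨n, hn⟩ | ⟨n, hn⟩
  · exact Or.inl ⟨n.val, hn⟩
  · exact Or.inr ⟨n.val, hn⟩

theorem stmt19 : (pathGraph 4 □ T₁).IsOneTough := by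
  intro S h2
  by_cases hu : ∃ n, sig^[n+1] ((0 : Fin 4), (0 : Fin 8)) ∈ S
  · refine key (pathGraph 4 □ T₁) sig sig_inj sig_adj (0,0) (0,3) (2,2) (2,3) (3,3) sig_orb
      ⟨10, by decide⟩ ⟨4, by decide⟩ ⟨7, by decide⟩
      ((G_adj _ _).mpr (by decide)) ?_ S hu
    · have hs : sig (2,2) = ((3 : Fin 4), (2 : Fin 8)) := by decide
      rw [hs]
      exact (G_adj _ _).mpr (by decide)
  · by_cases hv : ∃ n, sig^[n+1] ((0 : Fin 4), (3 : Fin 8)) ∈ S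
    · refine key (pathGraph 4 □ T₁) sig sig_inj sig_adj (0,3) (0,0) (1,3) (1,2) (2,2)
        (fun w => (sig_orb w).symm) ⟨3, by decide⟩ ⟨17, by decide⟩ ⟨10, by decide⟩
        ((G_adj _ _).mpr (by decide)) ?_ S hv
      · have hs : sig (1,3) = ((2 : Fin 4), (3 : Fin 8)) := by decide
        rw [hs]
        exact (G_adj _ _).mpr (by decide)
    · push_neg at hu hv
      have h1 := allconn (pathGraph 4 □ T₁) sig sig_inj sig_adj (0,0) (0,3) (2,2) (2,3)
        sig_orb ⟨10, by decide⟩ ⟨4, by decide⟩ ((G_adj _ _).mpr (by decide)) S hu hv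
      omega
end
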